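/- arXiv:2208.12895 — 7 statements merged into one kernel-verified Lean document; each statement's English description precedes it below -/
import Mathlib

section
/- Let p be prime, n ≥ 1, and let B = I_1 × ⋯ × I_n where each I_j ⊆ ℤ is a complete system of residues modulo p. Suppose f ∈ ℚ[X_1,…,X_n] is an integer-valued polynomial such that the degree of f in each variable X_j is at most p − 2, and every coefficient c of a monomial of f satisfies v_p(c) ≥ 0 (where v_p is the p-adic valuation). Then ∑_{a ∈ B} f(a) ≡ 0 mod p^n. -/
theorem stmt3 (p : ℕ) (hp : p.Prime) (n : ℕ) (hn : 1 ≤ n)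
    (I : Fin n → Finset ℤ)
    (hcard : ∀ j, (I j).card = p)
    (hres : ∀ j, ∀ x ∈ I j, ∀ y ∈ I j, x ≡ y [ZMOD (p : ℤ)] → x = y)
    (f : MvPolynomial (Fin n) ℚ)
    (hint : ∀ a : Fin n → ℤ, ∃ z : ℤ, MvPolynomial.eval (fun i => ((a i : ℤ) : ℚ)) f = z)
    (hdeg : ∀ j, MvPolynomial.degreeOf j f ≤ p - 2)
    (hval : ∀ d, MvPolynomial.coeff d f ≠ 0 → 0 ≤ padicValRat p (MvPolynomial.coeff d f)) :
    ∃ z : ℤ,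
      ∑ a ∈ Fintype.piFinset I, MvPolynomial.eval (fun i => ((a i : ℤ) : ℚ)) f
        = (p : ℚ) ^ n * z := by
  haveI : Fact p.Prime := ⟨hp⟩
  have hp2 : 2 ≤ p := hp.two_le
  set S := ∑ a ∈ Fintype.piFinset I, MvPolynomial.eval (fun i => ((a i : ℤ) : ℚ)) f with hS
  -- S is an integer
  obtain ⟨Z, hZ⟩ : ∃ Z : ℤ, S = (Z : ℚ) := by
    choose g hg using hint
    refine ⟨∑ a ∈ Fintype.piFinset I, g a, ?_⟩
    rw [hS]
    push_cast
    exact Finset.sum_congr rfl fun a _ => hg a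
  -- key residue lemma
  have key : ∀ (j : Fin n) (k : ℕ), k ≤ p - 2 → (p : ℤ) ∣ ∑ x ∈ I j, x ^ k := by
    intro j k hk
    rw [← ZMod.intCast_zmod_eq_zero_iff_dvd]
    push_cast
    have hinj : ∀ x ∈ I j, ∀ y ∈ I j, ((x : ZMod p) = (y : ZMod p)) → x = y := by
      intro x hx y hy hxy
      exact hres j x hx y hy ((ZMod.intCast_eq_intCast_iff _ _ _).mp hxy)
    have himg : (I j).image (fun x : ℤ => (x : ZMod p)) = Finset.univ := by
      apply Finset.eq_univ_of_card
      rw [Finset.card_image_of_injOn hinj, hcard j, ZMod.card]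
    calc ∑ x ∈ I j, ((x : ZMod p)) ^ k
        = ∑ y ∈ (I j).image (fun x : ℤ => (x : ZMod p)), y ^ k :=
          (Finset.sum_image (fun x hx y hy => hinj x hx y hy)).symm
      _ = ∑ y : ZMod p, y ^ k := by rw [himg]
      _ = 0 := by
          apply FiniteField.sum_pow_lt_card_sub_one
          rw [ZMod.card]; omega
  -- rewrite S as a sum over monomials
  have hswap : S = ∑ d ∈ f.support, MvPolynomial.coeff d f *
      ((∏ j, ∑ x ∈ I j, x ^ d j : ℤ) : ℚ) := by
    rw [hS]
    simp_rw [MvPolynomial.eval_eq']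
    rw [Finset.sum_comm]
    refine Finset.sum_congr rfl fun d hd => ?_
    rw [← Finset.mul_sum]
    congr 1
    push_cast
    exact (Finset.prod_univ_sum I fun i x => (x : ℚ) ^ d i).symm
  -- divisibility of each monomial sum
  have hdvd : ∀ d ∈ f.support, ((p : ℤ) ^ n) ∣ ∏ j, ∑ x ∈ I j, x ^ d j := by
    intro d hd
    have h1 : (∏ _j : Fin n, (p : ℤ)) ∣ ∏ j, ∑ x ∈ I j, x ^ d j := by
      refine Finset.prod_dvd_prod_of_dvd _ _ fun j _ => key j (d j) ?_
      have h2 : d j ≤ MvPolynomial.degreeOf j f := by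
        have := Finset.le_sup (f := fun m : Fin n →₀ ℕ => m j) hd
        rwa [← MvPolynomial.degreeOf_eq_sup] at this
      exact le_trans h2 (hdeg j)
    simpa using h1
  -- norm bound on S
  have hnormS : padicNorm p S ≤ (p : ℚ) ^ (-(n : ℤ)) := by
    rw [hswap]
    refine padicNorm.sum_le' (fun d hd => ?_) (by positivity)
    rw [padicNorm.mul]
    have hc1 : padicNorm p (MvPolynomial.coeff d f) ≤ 1 := by
      have hc0 : MvPolynomial.coeff d f ≠ 0 := MvPolynomial.mem_support_iff.mp hd
      rw [padicNorm.eq_zpow_of_nonzero hc0]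
      apply zpow_le_one_of_nonpos₀
      · exact_mod_cast hp.one_lt.le
      · have := hval d hc0
        omega
    have hc2 : padicNorm p ((∏ j, ∑ x ∈ I j, x ^ d j : ℤ) : ℚ) ≤ (p : ℚ) ^ (-(n : ℤ)) := by
      rw [← padicNorm.dvd_iff_norm_le]
      exact_mod_cast hdvd d hd
    calc padicNorm p (MvPolynomial.coeff d f) * padicNorm p ((∏ j, ∑ x ∈ I j, x ^ d j : ℤ) : ℚ)
        ≤ 1 * (p : ℚ) ^ (-(n : ℤ)) :=
          mul_le_mul hc1 hc2 (padicNorm.nonneg _) zero_le_one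
      _ = (p : ℚ) ^ (-(n : ℤ)) := one_mul _
  -- conclude divisibility of Z
  have hdvdZ : ((p ^ n : ℕ) : ℤ) ∣ Z := by
    rw [padicNorm.dvd_iff_norm_le]
    rwa [hZ] at hnormS
  obtain ⟨z, hz⟩ := hdvdZ
  refine ⟨z, ?_⟩
  rw [hZ, hz]
  push_cast
  ring
end

section
/- Let p be prime, n ≥ 0, let B = I_1 × ⋯ × I_n with each I_j ⊆ ℤ a complete system of residues modulo p, let f_1,…,f_s ∈ ℤ[X_1,…,X_n] be nonzero polynomials, and let f(x) = C(f_1(x), k_1) · C(f_2(x), k_2) ⋯ C(f_s(x), k_s) for some k_1,…,k_s ≥ 0, where C(·,·) denotes the binomial coefficient polynomial. If n ≥ (m−1) + (deg f + 1)/(p−1) for an integer m ≥ 1, then ∑_{a ∈ B} f(a) ≡ 0 mod p^m. -/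
open Polynomial Finset

/-- The binomial coefficient `C(x, k) = x(x-1)⋯(x-k+1)/k!` for a rational `x`. -/
noncomputable def binomQ (x : ℚ) (k : ℕ) : ℚ :=
  (∏ j ∈ Finset.range k, (x - j)) / (k.factorial : ℚ)

/-- The binomial polynomial over ℚ. -/
noncomputable def binP (t : ℕ) : Polynomial ℚ :=
  Polynomial.C ((t.factorial : ℚ)⁻¹) * ∏ j ∈ Finset.range t, (Polynomial.X - Polynomial.C (j : ℚ))

lemma binP_zero : binP 0 = 1 := by simp [binP]

lemma eval_binP (x : ℚ) (t : ℕ) : (binP t).eval x = binomQ x t := by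
  simp [binP, binomQ, eval_prod, div_eq_inv_mul]

lemma binP_eval_zero (t : ℕ) : (binP (t + 1)).eval 0 = 0 := by
  rw [eval_binP]
  simp only [binomQ]
  rw [Finset.prod_eq_zero (Finset.mem_range.mpr (Nat.succ_pos t)) (by norm_num)]
  simp

lemma degree_prod_lin (t : ℕ) :
    (∏ j ∈ Finset.range t, (Polynomial.X - Polynomial.C (j : ℚ))).degree = (t : WithBot ℕ) := by
  rw [Polynomial.degree_prod]
  simp only [Polynomial.degree_X_sub_C]
  simp

lemma degree_binP_le (t : ℕ) : (binP t).degree ≤ (t : WithBot ℕ) := by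
  refine (Polynomial.degree_mul_le _ _).trans ?_
  rw [degree_prod_lin]
  refine le_trans (add_le_add_left Polynomial.degree_C_le _) ?_
  simp

lemma coeff_binP_self (t : ℕ) : (binP t).coeff t = (t.factorial : ℚ)⁻¹ := by
  have hm : (∏ j ∈ Finset.range t, (Polynomial.X - Polynomial.C (j : ℚ))).Monic :=
    Polynomial.monic_prod_of_monic _ _ fun j _ => Polynomial.monic_X_sub_C _
  have hd : (∏ j ∈ Finset.range t, (Polynomial.X - Polynomial.C (j : ℚ))).natDegree = t :=
    Polynomial.natDegree_eq_of_degree_eq_some (degree_prod_lin t)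
  have h1 := hm.coeff_natDegree
  rw [hd] at h1
  rw [binP, Polynomial.coeff_C_mul, h1, mul_one]

/-- Forward difference operator. -/
noncomputable def Dl (g : Polynomial ℚ) : Polynomial ℚ :=
  g.comp (Polynomial.X + 1) - g

lemma Dl_eval (g : Polynomial ℚ) (x : ℚ) : (Dl g).eval x = g.eval (x + 1) - g.eval x := by
  simp [Dl, Polynomial.eval_comp]

lemma Dl_C_mul (c : ℚ) (g : Polynomial ℚ) : Dl (Polynomial.C c * g) = Polynomial.C c * Dl g := by
  simp [Dl, Polynomial.mul_comp, mul_sub]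

lemma Dl_sum {α : Type*} (s : Finset α) (g : α → Polynomial ℚ) :
    Dl (∑ a ∈ s, g a) = ∑ a ∈ s, Dl (g a) := by
  classical
  induction s using Finset.induction with
  | empty => simp [Dl]
  | insert _ _ h ih =>
    rw [Finset.sum_insert h, Finset.sum_insert h, ← ih]
    simp only [Dl, Polynomial.add_comp]
    ring

/-- Pascal's rule for binomial polynomials. -/
lemma binP_pascal (t : ℕ) :
    (binP (t + 1)).comp (Polynomial.X + 1) = binP (t + 1) + binP t := by
  have hfac : ((t + 1).factorial : ℚ) ≠ 0 := by exact_mod_cast (t + 1).factorial_ne_zero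
  apply mul_left_cancel₀ (show (Polynomial.C (((t + 1).factorial : ℚ))) ≠ 0 by simpa using hfac)
  have hC : Polynomial.C (((t+1).factorial : ℚ)) * binP (t+1) =
      ∏ j ∈ Finset.range (t+1), (Polynomial.X - Polynomial.C (j : ℚ)) := by
    rw [binP, ← mul_assoc, ← Polynomial.C_mul, mul_inv_cancel₀ hfac, Polynomial.C_1, one_mul]
  have hC2 : Polynomial.C (((t+1).factorial : ℚ)) * binP t =
      (Polynomial.C ((t : ℚ)) + 1) *
        ∏ j ∈ Finset.range t, (Polynomial.X - Polynomial.C (j : ℚ)) := by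
    rw [binP, ← mul_assoc, ← Polynomial.C_mul]
    congr 1
    rw [Nat.factorial_succ, ← Polynomial.C_1, ← Polynomial.C_add]
    congr 1
    push_cast
    rw [mul_inv_cancel_right₀]
    exact_mod_cast t.factorial_ne_zero
  have e1 : (∏ j ∈ Finset.range (t+1), (Polynomial.X - Polynomial.C (j : ℚ))).comp
        (Polynomial.X + 1) =
      (Polynomial.X + 1) * ∏ j ∈ Finset.range t, (Polynomial.X - Polynomial.C (j : ℚ)) := by
    rw [Polynomial.prod_comp, Finset.prod_range_succ']
    simp only [Polynomial.sub_comp, Polynomial.X_comp, Polynomial.C_comp]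
    rw [show (((0:ℕ)):ℚ) = 0 by norm_num, Polynomial.C_0, sub_zero, mul_comm]
    congr 1
    refine Finset.prod_congr rfl fun j _ => ?_
    push_cast
    rw [Polynomial.C_add, Polynomial.C_1]
    ring
  rw [mul_add, hC, hC2, ← Polynomial.C_comp (a := (((t+1).factorial : ℚ)))
      (p := (Polynomial.X + 1)), ← Polynomial.mul_comp, hC, e1, Finset.prod_range_succ]
  ring

lemma Dl_binP_zero : Dl (binP 0) = 0 := by
  simp [binP_zero, Dl]

lemma Dl_binP_succ (t : ℕ) : Dl (binP (t + 1)) = binP t := by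
  rw [Dl, binP_pascal]; ring

lemma Dl_iter_sum (K : ℕ) (b : ℕ → ℚ) (s : ℕ) :
    Dl^[s] (∑ t ∈ Finset.range K, Polynomial.C (b t) * binP t) =
      ∑ t ∈ Finset.range (K - s), Polynomial.C (b (t + s)) * binP t := by
  induction s with
  | zero => simp
  | succ s ih =>
    rw [Function.iterate_succ_apply', ih]
    rcases Nat.eq_zero_or_pos (K - s) with h | h
    · rw [h]
      have : K - (s + 1) = 0 := by omega
      rw [this]
      simp [Dl]
    · obtain ⟨r, hr⟩ : ∃ r, K - s = r + 1 := ⟨K - s - 1, by omega⟩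
      have hr2 : K - (s + 1) = r := by omega
      rw [hr, hr2, Dl_sum, Finset.sum_range_succ']
      simp only [Dl_C_mul, Dl_binP_zero, mul_zero, add_zero, Dl_binP_succ]
      refine Finset.sum_congr rfl fun t _ => ?_
      have h3 : t + 1 + s = t + (s + 1) := by omega
      rw [h3]

lemma eval_zero_expansion (K : ℕ) (b : ℕ → ℚ) (s : ℕ) (hs : s < K) :
    (Dl^[s] (∑ t ∈ Finset.range K, Polynomial.C (b t) * binP t)).eval 0 = b s := by
  rw [Dl_iter_sum]
  obtain ⟨r, hr⟩ : ∃ r, K - s = r + 1 := ⟨K - s - 1, by omega⟩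
  rw [hr, Finset.sum_range_succ', Polynomial.eval_add, Polynomial.eval_finset_sum]
  simp only [Polynomial.eval_mul, Polynomial.eval_C, binP_eval_zero, mul_zero,
    Finset.sum_const_zero, zero_add, binP_zero, Polynomial.eval_one, mul_one]

lemma intval_iter (s : ℕ) : ∀ g : Polynomial ℚ, (∀ r : ℤ, ∃ z : ℤ, g.eval (r : ℚ) = z) →
    ∀ r : ℤ, ∃ z : ℤ, (Dl^[s] g).eval (r : ℚ) = z := by
  induction s with
  | zero => intro g hg r; exact hg r
  | succ s ih =>
    intro g hg r
    rw [Function.iterate_succ_apply]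
    refine ih (Dl g) (fun r' => ?_) r
    obtain ⟨z1, hz1⟩ := hg (r' + 1)
    obtain ⟨z2, hz2⟩ := hg r'
    refine ⟨z1 - z2, ?_⟩
    rw [Dl_eval]
    push_cast at hz1 ⊢
    rw [hz1, hz2]

abbrev Rn (n : ℕ) := MvPolynomial (Fin n) ℚ

noncomputable def binPR (n t : ℕ) : Polynomial (Rn n) :=
  (binP t).map (algebraMap ℚ (Rn n))

lemma degree_binPR_le (n t : ℕ) : (binPR n t).degree ≤ (t : WithBot ℕ) :=
  le_trans (Polynomial.degree_map_le) (degree_binP_le t)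

lemma coeff_binPR (n t i : ℕ) :
    (binPR n t).coeff i = algebraMap ℚ (Rn n) ((binP t).coeff i) := by
  simp [binPR, Polynomial.coeff_map]

lemma totalDegree_algebraMap (n : ℕ) (q : ℚ) :
    (algebraMap ℚ (Rn n) q).totalDegree = 0 := by
  rw [MvPolynomial.algebraMap_eq]
  exact MvPolynomial.totalDegree_C q

lemma sub_bound {n D i : ℕ} (u v : Rn n)
    (hu : u = 0 ∨ u.totalDegree + i ≤ D) (hv : v = 0 ∨ v.totalDegree + i ≤ D) :
    u - v = 0 ∨ (u - v).totalDegree + i ≤ D := by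
  by_cases h : u - v = 0
  · exact Or.inl h
  right
  rcases hu with hu | hu <;> rcases hv with hv | hv
  · exact absurd (by rw [hu, hv, sub_zero]) h
  · rw [hu, zero_sub, MvPolynomial.totalDegree_neg]; exact hv
  · rw [hv, sub_zero]; exact hu
  · refine le_trans (add_le_add_left (MvPolynomial.totalDegree_sub u v) i) ?_
    rw [max_def]
    split <;> omega

lemma EXP (n D : ℕ) : ∀ (K : ℕ) (g : Polynomial (Rn n)),
    g.degree < (K : WithBot ℕ) →
    (∀ i, g.coeff i = 0 ∨ (g.coeff i).totalDegree + i ≤ D) →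
    ∃ b : ℕ → Rn n,
      (∀ t, b t = 0 ∨ (b t).totalDegree + t ≤ D) ∧
      g = ∑ t ∈ Finset.range K, Polynomial.C (b t) * binPR n t := by
  intro K
  induction K with
  | zero =>
    intro g hdeg _
    have : g = 0 := by
      rw [← Polynomial.degree_eq_bot]
      exact Nat.WithBot.lt_zero_iff.mp (by exact_mod_cast hdeg)
    exact ⟨0, fun t => Or.inl rfl, by simp [this]⟩
  | succ K ih =>
    intro g hdeg H
    set a := g.coeff K with ha
    set c := a * algebraMap ℚ (Rn n) ((K.factorial : ℚ)) with hc
    set g' := g - Polynomial.C c * binPR n K with hg'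
    have hcb : c = 0 ∨ c.totalDegree + K ≤ D := by
      rcases H K with h | h
      · left; rw [hc, show a = 0 from ha.trans h, zero_mul]
      · right
        refine le_trans (add_le_add_left ?_ K) h
        refine le_trans (MvPolynomial.totalDegree_mul _ _) ?_
        rw [totalDegree_algebraMap, add_zero]
    have hvK : ∀ i : ℕ, Polynomial.C c * binPR n K = 0 ∨
        ((Polynomial.C c * binPR n K).coeff i = 0 ∨
          ((Polynomial.C c * binPR n K).coeff i).totalDegree + i ≤ D) := by
      intro i; right
      rw [Polynomial.coeff_C_mul, coeff_binPR]
      rcases Nat.lt_or_ge K i with hi | hi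
      · left
        have : (binP K).coeff i = 0 :=
          Polynomial.coeff_eq_zero_of_degree_lt
            (lt_of_le_of_lt (degree_binP_le K) (by exact_mod_cast hi))
        rw [this, map_zero, mul_zero]
      · rcases hcb with h | h
        · left; rw [h, zero_mul]
        · right
          have : (c * algebraMap ℚ (Rn n) ((binP K).coeff i)).totalDegree ≤ c.totalDegree := by
            refine le_trans (MvPolynomial.totalDegree_mul _ _) ?_
            rw [totalDegree_algebraMap, add_zero]
          omega
    have hK0 : g'.coeff K = 0 := by
      rw [hg', Polynomial.coeff_sub, Polynomial.coeff_C_mul, coeff_binPR, coeff_binP_self,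
        hc, mul_assoc, ← map_mul, mul_inv_cancel₀ (by exact_mod_cast K.factorial_ne_zero),
        map_one, mul_one, ← ha, sub_self]
    have hdeg' : g'.degree < (K : WithBot ℕ) := by
      rw [Polynomial.degree_lt_iff_coeff_zero]
      intro m hm
      rcases eq_or_lt_of_le hm with rfl | hm'
      · exact hK0
      have hmK : (K : WithBot ℕ) < (m : WithBot ℕ) := by exact_mod_cast hm'
      have h1 : g.coeff m = 0 := Polynomial.coeff_eq_zero_of_degree_lt
        (lt_of_lt_of_le hdeg (by exact_mod_cast (by omega : K + 1 ≤ m)))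
      have h2 : (binPR n K).coeff m = 0 := Polynomial.coeff_eq_zero_of_degree_lt
        (lt_of_le_of_lt (degree_binPR_le n K) hmK)
      rw [hg', Polynomial.coeff_sub, Polynomial.coeff_C_mul, h1, h2, mul_zero, sub_zero]
    have H' : ∀ i, g'.coeff i = 0 ∨ (g'.coeff i).totalDegree + i ≤ D := by
      intro i
      rw [hg', Polynomial.coeff_sub]
      refine sub_bound _ _ (H i) ?_
      rcases hvK i with h | h
      · rw [h, Polynomial.coeff_zero]; exact Or.inl rfl
      · exact h
    obtain ⟨b', hb', hgsum⟩ := ih g' hdeg' H'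
    refine ⟨Function.update b' K c, ?_, ?_⟩
    · intro t
      rcases eq_or_ne t K with rfl | ht
      · rw [Function.update_self]; exact hcb
      · rw [Function.update_of_ne ht]; exact hb' t
    · rw [Finset.sum_range_succ, Function.update_self]
      have : ∑ t ∈ Finset.range K, Polynomial.C (Function.update b' K c t) * binPR n t =
          ∑ t ∈ Finset.range K, Polynomial.C (b' t) * binPR n t := by
        refine Finset.sum_congr rfl fun t ht => ?_
        rw [Function.update_of_ne (by simp at ht; omega)]
      rw [this, ← hgsum, hg']
      ring

/-- The box of exponent vectors. -/
noncomputable def Box (n K : ℕ) : Finset (Fin n → ℕ) :=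
  Fintype.piFinset (fun _ : Fin n => Finset.range K)

lemma sum_box_mono (n D K : ℕ) (hK : D + 1 ≤ K) (c : (Fin n → ℕ) → ℚ)
    (hc : ∀ d, c d ≠ 0 → ∑ j, d j ≤ D) (F : (Fin n → ℕ) → ℚ) :
    ∑ d ∈ Box n (D + 1), c d * F d = ∑ d ∈ Box n K, c d * F d := by
  apply Finset.sum_subset
  · intro d hd
    rw [Box, Fintype.mem_piFinset] at hd ⊢
    intro j
    exact Finset.mem_range.mpr (lt_of_lt_of_le (Finset.mem_range.mp (hd j)) hK)
  · intro d hd hd'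
    rw [Box, Fintype.mem_piFinset] at hd'
    push_neg at hd'
    obtain ⟨j, hj⟩ := hd'
    have hj' : D + 1 ≤ d j := by
      by_contra hcon
      exact hj (Finset.mem_range.mpr (by omega))
    have hsum : D + 1 ≤ ∑ j, d j :=
      le_trans hj' (Finset.single_le_sum (fun _ _ => Nat.zero_le _) (Finset.mem_univ j))
    have : c d = 0 := by
      by_contra hcd
      exact absurd (hc d hcd) (by omega)
    rw [this, zero_mul]

lemma sum_box_succ (n K : ℕ) (F : (Fin (n + 1) → ℕ) → ℚ) :
    ∑ d ∈ Box (n + 1) K, F d =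
      ∑ t ∈ Finset.range K, ∑ d' ∈ Box n K, F (Fin.cons t d') := by
  rw [← Finset.sum_product']
  refine Finset.sum_nbij' (fun d => (d 0, Fin.tail d)) (fun pr => Fin.cons pr.1 pr.2)
    ?_ ?_ ?_ ?_ ?_
  · intro d hd
    rw [Box, Fintype.mem_piFinset] at hd
    refine Finset.mem_product.mpr ⟨hd 0, ?_⟩
    rw [Box, Fintype.mem_piFinset]
    intro j
    exact hd j.succ
  · intro pr hpr
    rw [Finset.mem_product] at hpr
    rw [Box, Fintype.mem_piFinset]
    intro j
    cases j using Fin.cases with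
    | zero => simpa using hpr.1
    | succ i => simpa using Fintype.mem_piFinset.mp hpr.2 i
  · intro d _; exact Fin.cons_self_tail d
  · intro pr _
    simp [Fin.tail_cons]
  · intro d _
    rw [Fin.cons_self_tail]

lemma MV : ∀ (n D : ℕ) (G : Rn n), G.totalDegree ≤ D →
    ∃ c : (Fin n → ℕ) → ℚ,
      (∀ d, c d ≠ 0 → ∑ j, d j ≤ D) ∧
      (∀ x : Fin n → ℚ, MvPolynomial.eval x G =
        ∑ d ∈ Box n (D + 1), c d * ∏ j, binomQ (x j) (d j)) ∧
      ((∀ y : Fin n → ℤ, ∃ z : ℤ, MvPolynomial.eval (fun j => ((y j : ℤ) : ℚ)) G = z) →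
        ∀ d, ∃ z : ℤ, c d = z) := by
  intro n
  induction n with
  | zero =>
    intro D G _
    refine ⟨fun _ => MvPolynomial.eval (fun j => j.elim0) G, ?_, ?_, ?_⟩
    · intro d _; simp
    · intro x
      obtain ⟨e, he⟩ := Finset.card_eq_one.mp (by simp [Box] : (Box 0 (D + 1)).card = 1)
      rw [he, Finset.sum_singleton]
      have hx : x = fun j => j.elim0 := _root_.funext fun j => j.elim0
      simp [hx]
    · intro hint d
      obtain ⟨z, hz⟩ := hint (fun j => j.elim0)
      refine ⟨z, ?_⟩
      rw [← hz]
      exact congrArg (fun v : Fin 0 → ℚ => MvPolynomial.eval v G)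
        (_root_.funext fun j => j.elim0)
  | succ n IH =>
    intro D G hdegG
    set g := MvPolynomial.finSuccEquiv ℚ n G with hgdef
    have hdeg : g.degree < ((D + 1 : ℕ) : WithBot ℕ) := by
      by_cases h0 : g = 0
      · rw [h0, Polynomial.degree_zero]; exact WithBot.bot_lt_coe _
      · rw [← Polynomial.natDegree_lt_iff_degree_lt h0]
        have h1 : g.natDegree = MvPolynomial.degreeOf 0 G := MvPolynomial.natDegree_finSuccEquiv G
        have h2 := MvPolynomial.degreeOf_le_totalDegree G 0
        omega
    have Hc : ∀ i, g.coeff i = 0 ∨ (g.coeff i).totalDegree + i ≤ D := by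
      intro i
      by_cases h : g.coeff i = 0
      · exact Or.inl h
      · exact Or.inr (le_trans (MvPolynomial.totalDegree_coeff_finSuccEquiv_add_le G i h) hdegG)
    obtain ⟨b, hb, hgsum⟩ := EXP n D (D + 1) g hdeg Hc
    have hmap : ∀ x' : Fin n → ℚ, g.map (MvPolynomial.eval x') =
        ∑ t ∈ Finset.range (D + 1), Polynomial.C (MvPolynomial.eval x' (b t)) * binP t := by
      intro x'
      rw [hgsum, Polynomial.map_sum]
      refine Finset.sum_congr rfl fun t _ => ?_
      rw [Polynomial.map_mul, Polynomial.map_C]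
      congr 1
      rw [binPR, Polynomial.map_map]
      have hcomp : (MvPolynomial.eval x').comp (algebraMap ℚ (Rn n)) = RingHom.id ℚ :=
        RingHom.ext fun q => by simp [MvPolynomial.algebraMap_eq]
      rw [hcomp, Polynomial.map_id]
    have heval : ∀ x : Fin (n + 1) → ℚ, MvPolynomial.eval x G =
        ∑ t ∈ Finset.range (D + 1),
          MvPolynomial.eval (Fin.tail x) (b t) * binomQ (x 0) t := by
      intro x
      calc MvPolynomial.eval x G
          = MvPolynomial.eval (Fin.cons (x 0) (Fin.tail x)) G := by rw [Fin.cons_self_tail]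
        _ = Polynomial.eval (x 0) (g.map (MvPolynomial.eval (Fin.tail x))) :=
            MvPolynomial.eval_eq_eval_mv_eval' (Fin.tail x) (x 0) G
        _ = _ := by
            rw [hmap, Polynomial.eval_finset_sum]
            exact Finset.sum_congr rfl fun t _ => by
              rw [Polynomial.eval_mul, Polynomial.eval_C, eval_binP]
    have hbint : (∀ y : Fin (n + 1) → ℤ, ∃ z : ℤ,
          MvPolynomial.eval (fun j => ((y j : ℤ) : ℚ)) G = z) →
        ∀ t, t < D + 1 → ∀ y' : Fin n → ℤ, ∃ z : ℤ,
          MvPolynomial.eval (fun j => ((y' j : ℤ) : ℚ)) (b t) = z := by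
      intro hint t ht y'
      set x' : Fin n → ℚ := fun j => ((y' j : ℤ) : ℚ) with hx'
      set q : Polynomial ℚ := g.map (MvPolynomial.eval x') with hq
      have hqint : ∀ r : ℤ, ∃ z : ℤ, q.eval (r : ℚ) = z := by
        intro r
        obtain ⟨z, hz⟩ := hint (Fin.cons r y')
        refine ⟨z, ?_⟩
        have h1 := MvPolynomial.eval_eq_eval_mv_eval' x' ((r : ℤ) : ℚ) G
        have harg : (fun j => (((Fin.cons r y' : Fin (n + 1) → ℤ) j : ℤ) : ℚ)) = Fin.cons ((r : ℤ) : ℚ) x' := by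
          funext j
          cases j using Fin.cases with
          | zero => simp
          | succ i => simp [hx']
        calc q.eval ((r : ℤ) : ℚ) = MvPolynomial.eval (Fin.cons ((r : ℤ) : ℚ) x') G := h1.symm
          _ = MvPolynomial.eval (fun j => (((Fin.cons r y' : Fin (n + 1) → ℤ) j : ℤ) : ℚ)) G := by rw [harg]
          _ = z := hz
      have hu : MvPolynomial.eval x' (b t) = (Dl^[t] q).eval 0 := by
        rw [hq, hmap x']
        exact (eval_zero_expansion (D + 1) (fun s => MvPolynomial.eval x' (b s)) t ht).symm
      obtain ⟨z, hz⟩ := intval_iter t q hqint 0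
      rw [Int.cast_zero] at hz
      exact ⟨z, by rw [hu, hz]⟩
    have hbt : ∀ t, t ≤ D → (b t).totalDegree ≤ D - t := by
      intro t ht
      rcases hb t with h | h
      · rw [h]; simp
      · omega
    have IHall : ∀ t : ℕ, t ≤ D → ∃ c' : (Fin n → ℕ) → ℚ,
        (∀ d, c' d ≠ 0 → ∑ j, d j ≤ D - t) ∧
        (∀ x : Fin n → ℚ, MvPolynomial.eval x (b t) =
          ∑ d ∈ Box n (D - t + 1), c' d * ∏ j, binomQ (x j) (d j)) ∧
        ((∀ y : Fin n → ℤ, ∃ z : ℤ, MvPolynomial.eval (fun j => ((y j : ℤ) : ℚ)) (b t) = z) →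
          ∀ d, ∃ z : ℤ, c' d = z) :=
      fun t ht => IH (D - t) (b t) (hbt t ht)
    classical
    let cf : ℕ → (Fin n → ℕ) → ℚ := fun t =>
      if ht : t ≤ D then (IHall t ht).choose else 0
    have cfspec : ∀ t (ht : t ≤ D),
        (∀ d, cf t d ≠ 0 → ∑ j, d j ≤ D - t) ∧
        (∀ x : Fin n → ℚ, MvPolynomial.eval x (b t) =
          ∑ d ∈ Box n (D - t + 1), cf t d * ∏ j, binomQ (x j) (d j)) ∧
        ((∀ y : Fin n → ℤ, ∃ z : ℤ, MvPolynomial.eval (fun j => ((y j : ℤ) : ℚ)) (b t) = z) →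
          ∀ d, ∃ z : ℤ, cf t d = z) := by
      intro t ht
      have : cf t = (IHall t ht).choose := by simp only [cf, dif_pos ht]
      rw [this]
      exact (IHall t ht).choose_spec
    refine ⟨fun d => if d 0 ≤ D then cf (d 0) (Fin.tail d) else 0, ?_, ?_, ?_⟩
    · intro d hd
      by_cases h0 : d 0 ≤ D
      · change (if d 0 ≤ D then cf (d 0) (Fin.tail d) else 0) ≠ 0 at hd
        rw [if_pos h0] at hd
        have hsupp := (cfspec (d 0) h0).1 (Fin.tail d) hd
        rw [Fin.sum_univ_succ]
        have : ∑ i : Fin n, d i.succ = ∑ i : Fin n, Fin.tail d i := rfl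
        omega
      · change (if d 0 ≤ D then cf (d 0) (Fin.tail d) else 0) ≠ 0 at hd
        rw [if_neg h0] at hd; exact absurd rfl hd
    · intro x
      rw [heval x, sum_box_succ]
      refine Finset.sum_congr rfl fun t ht => ?_
      have htD : t ≤ D := by
        have := Finset.mem_range.mp ht; omega
      have hid := (cfspec t htD).2.1 (Fin.tail x)
      have hpad := sum_box_mono n (D - t) (D + 1) (by omega) (cf t)
        ((cfspec t htD).1) (fun d' => ∏ j, binomQ (Fin.tail x j) (d' j))
      rw [hid, hpad, Finset.sum_mul]
      refine Finset.sum_congr rfl fun d' _ => ?_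
      simp only [Fin.cons_zero, Fin.tail_cons, if_pos htD, Fin.prod_univ_succ, Fin.cons_succ]
      have : ∀ i : Fin n, binomQ (x i.succ) (d' i) = binomQ (Fin.tail x i) (d' i) :=
        fun i => rfl
      rw [Finset.prod_congr rfl fun i _ => this i]
      ring
    · intro hint d
      by_cases h0 : d 0 ≤ D
      · simp only [if_pos h0]
        exact (cfspec (d 0) h0).2.2 (hbint hint (d 0) (by omega)) (Fin.tail d)
      · exact ⟨0, by simp [if_neg h0]⟩

lemma descPoch_prod (a : ℤ) (d : ℕ) :
    (descPochhammer ℤ d).eval a = ∏ j ∈ Finset.range d, (a - j) := by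
  induction d with
  | zero => simp [descPochhammer_zero]
  | succ d ih => rw [descPochhammer_succ_eval, Finset.prod_range_succ, ih]

lemma choose_fact (a : ℤ) (d : ℕ) :
    (d.factorial : ℤ) * Ring.choose a d = ∏ j ∈ Finset.range d, (a - j) := by
  rw [← descPoch_prod, Polynomial.eval_eq_smeval,
    Ring.descPochhammer_eq_factorial_smul_choose, nsmul_eq_mul]

lemma binomQ_int (a : ℤ) (d : ℕ) : binomQ (a : ℚ) d = ((Ring.choose a d : ℤ) : ℚ) := by
  have hfac : ((d.factorial : ℕ) : ℚ) ≠ 0 := by exact_mod_cast d.factorial_ne_zero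
  rw [binomQ, div_eq_iff hfac]
  have h2 : ((∏ j ∈ Finset.range d, (a - (j : ℤ)) : ℤ) : ℚ)
      = ∏ j ∈ Finset.range d, ((a : ℚ) - (j : ℕ)) := by push_cast; rfl
  rw [← h2, ← choose_fact a d]
  push_cast
  ring

lemma sum_prod_lin (p d : ℕ) [Fact p.Prime] (hd : d < p - 1) :
    ∑ u : ZMod p, ∏ j ∈ Finset.range d, (u - (j : ZMod p)) = 0 := by
  set Q : Polynomial (ZMod p) := ∏ j ∈ Finset.range d, (Polynomial.X - Polynomial.C (j : ZMod p))
    with hQ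
  have hQdeg : Q.natDegree ≤ d := by
    refine le_trans (Polynomial.natDegree_prod_le _ _) (le_trans
      (Finset.sum_le_sum fun j _ => (Polynomial.natDegree_X_sub_C (j : ZMod p)).le) ?_)
    simp
  have hev : ∀ u : ZMod p, ∏ j ∈ Finset.range d, (u - (j : ZMod p)) = Q.eval u := by
    intro u; rw [hQ, Polynomial.eval_prod]; simp
  rw [Finset.sum_congr rfl fun u _ => hev u]
  rw [Finset.sum_congr rfl fun u _ => Polynomial.eval_eq_sum_range' (by omega : Q.natDegree < d + 1) u]
  rw [Finset.sum_comm]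
  refine Finset.sum_eq_zero fun i hi => ?_
  rw [← Finset.mul_sum, FiniteField.sum_pow_lt_card_sub_one (K := ZMod p) i ?_, mul_zero]
  rw [ZMod.card]
  have := Finset.mem_range.mp hi
  omega

lemma sum_choose_dvd (p : ℕ) (hp : p.Prime) (I : Finset ℤ) (hcard : I.card = p)
    (hres : ∀ x ∈ I, ∀ y ∈ I, x ≡ y [ZMOD (p : ℤ)] → x = y) (d : ℕ) (hd : d < p - 1) :
    (p : ℤ) ∣ ∑ a ∈ I, Ring.choose a d := by
  haveI := Fact.mk hp
  rw [← ZMod.intCast_zmod_eq_zero_iff_dvd]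
  have hS : ((∑ a ∈ I, Ring.choose a d : ℤ) : ZMod p)
      = ∑ a ∈ I, ((Ring.choose a d : ℤ) : ZMod p) := by push_cast; rfl
  rw [hS]
  have hfac : ((d.factorial : ℕ) : ZMod p) ≠ 0 := by
    rw [Ne, ZMod.natCast_eq_zero_iff]
    intro hdvd
    have := (Nat.Prime.dvd_factorial hp).mp hdvd
    omega
  have key : ((d.factorial : ℕ) : ZMod p) * ∑ a ∈ I, ((Ring.choose a d : ℤ) : ZMod p) = 0 := by
    rw [Finset.mul_sum]
    have each : ∀ a : ℤ, ((d.factorial : ℕ) : ZMod p) * ((Ring.choose a d : ℤ) : ZMod p)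
        = ∏ j ∈ Finset.range d, ((a : ZMod p) - (j : ZMod p)) := by
      intro a
      have h1 := choose_fact a d
      calc ((d.factorial : ℕ) : ZMod p) * ((Ring.choose a d : ℤ) : ZMod p)
          = (((d.factorial : ℤ) * Ring.choose a d : ℤ) : ZMod p) := by push_cast; ring
        _ = ((∏ j ∈ Finset.range d, (a - j) : ℤ) : ZMod p) := by rw [h1]
        _ = ∏ j ∈ Finset.range d, ((a : ZMod p) - (j : ZMod p)) := by push_cast; rfl
    rw [Finset.sum_congr rfl fun a _ => each a]
    have hinj : Set.InjOn (fun a : ℤ => (a : ZMod p)) I := by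
      intro x hx y hy hxy
      exact hres x hx y hy ((ZMod.intCast_eq_intCast_iff _ _ _).mp hxy)
    have himg : I.image (fun a : ℤ => (a : ZMod p)) = Finset.univ := by
      apply Finset.eq_univ_of_card
      rw [Finset.card_image_of_injOn hinj, hcard, ZMod.card]
    calc ∑ a ∈ I, ∏ j ∈ Finset.range d, ((a : ZMod p) - (j : ZMod p))
        = ∑ u ∈ I.image (fun a : ℤ => (a : ZMod p)), ∏ j ∈ Finset.range d, (u - (j : ZMod p)) :=
          (Finset.sum_image (f := fun u : ZMod p => ∏ j ∈ Finset.range d, (u - (j : ZMod p)))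
            (g := fun a : ℤ => (a : ZMod p)) fun x hx y hy h => hinj hx hy h).symm
      _ = ∑ u : ZMod p, ∏ j ∈ Finset.range d, (u - (j : ZMod p)) := by rw [himg]
      _ = 0 := sum_prod_lin p d hd
  rcases mul_eq_zero.mp key with h | h
  · exact absurd h hfac
  · exact h

lemma eval_map_intCast (n : ℕ) (φ : MvPolynomial (Fin n) ℤ) (a : Fin n → ℤ) :
    MvPolynomial.eval (fun j => ((a j : ℤ) : ℚ)) (MvPolynomial.map (Int.castRingHom ℚ) φ)
      = ((MvPolynomial.eval a φ : ℤ) : ℚ) := by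
  rw [MvPolynomial.eval_map]
  calc MvPolynomial.eval₂ (Int.castRingHom ℚ) (fun j => ((a j : ℤ) : ℚ)) φ
      = MvPolynomial.eval₂ ((Int.castRingHom ℚ).comp (RingHom.id ℤ))
        ((fun z : ℤ => (z : ℚ)) ∘ a) φ := by rw [RingHom.comp_id]; rfl
    _ = (Int.castRingHom ℚ) (MvPolynomial.eval₂ (RingHom.id ℤ) a φ) :=
        (MvPolynomial.eval₂_comp_left _ _ _ _).symm
    _ = ((MvPolynomial.eval a φ : ℤ) : ℚ) := rfl

theorem stmt4 (p : ℕ) (hp : p.Prime) (n s : ℕ) (hs : 1 ≤ s)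
    (I : Fin n → Finset ℤ)
    (hcard : ∀ j, (I j).card = p)
    (hres : ∀ j, ∀ x ∈ I j, ∀ y ∈ I j, x ≡ y [ZMOD (p : ℤ)] → x = y)
    (f : Fin s → MvPolynomial (Fin n) ℤ) (hf : ∀ i, f i ≠ 0)
    (k : Fin s → ℕ) (m : ℕ) (hm : 1 ≤ m)
    (hdeg : (n : ℚ) ≥ ((m : ℚ) - 1) +
      (((∑ i, k i * (f i).totalDegree : ℕ) : ℚ) + 1) / ((p : ℚ) - 1)) :
    ∃ z : ℤ,
      ∑ a ∈ Fintype.piFinset I,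
        ∏ i, binomQ ((MvPolynomial.eval a (f i) : ℤ) : ℚ) (k i)
      = (p : ℚ) ^ m * z := by
  classical
  set D := ∑ i, k i * (f i).totalDegree with hD
  set Fq : Fin s → Rn n := fun i => MvPolynomial.map (Int.castRingHom ℚ) (f i) with hFq
  set G : Rn n := ∏ i, (MvPolynomial.C (((k i).factorial : ℚ)⁻¹) *
      ∏ j ∈ Finset.range (k i), (Fq i - MvPolynomial.C (j : ℚ))) with hG
  have hdegFq : ∀ i, (Fq i).totalDegree ≤ (f i).totalDegree := fun i =>
    Finset.sup_mono (MvPolynomial.support_map_subset _ _)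
  have hdegG : G.totalDegree ≤ D := by
    refine le_trans (MvPolynomial.totalDegree_finset_prod _ _) ?_
    rw [hD]
    refine Finset.sum_le_sum fun i _ => ?_
    refine le_trans (MvPolynomial.totalDegree_mul _ _) ?_
    rw [MvPolynomial.totalDegree_C, zero_add]
    refine le_trans (MvPolynomial.totalDegree_finset_prod _ _) ?_
    refine le_trans (Finset.sum_le_sum (fun j _ =>
      (le_trans (MvPolynomial.totalDegree_sub _ _) (by
        rw [MvPolynomial.totalDegree_C, Nat.max_zero]
        exact hdegFq i) : (Fq i - MvPolynomial.C ((j : ℕ) : ℚ)).totalDegree ≤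
          (f i).totalDegree))) ?_
    rw [Finset.sum_const, Finset.card_range, smul_eq_mul]
  have hevalG : ∀ a : Fin n → ℤ, MvPolynomial.eval (fun j => ((a j : ℤ) : ℚ)) G
      = ∏ i, binomQ ((MvPolynomial.eval a (f i) : ℤ) : ℚ) (k i) := by
    intro a
    rw [hG, map_prod]
    refine Finset.prod_congr rfl fun i _ => ?_
    rw [map_mul, MvPolynomial.eval_C, map_prod, binomQ, div_eq_inv_mul]
    congr 1
    refine Finset.prod_congr rfl fun j _ => ?_
    rw [map_sub, MvPolynomial.eval_C, hFq, eval_map_intCast]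
  have hGint : ∀ y : Fin n → ℤ, ∃ z : ℤ, MvPolynomial.eval (fun j => ((y j : ℤ) : ℚ)) G = z := by
    intro y
    refine ⟨∏ i, Ring.choose (MvPolynomial.eval y (f i)) (k i), ?_⟩
    rw [hevalG y]
    push_cast
    exact Finset.prod_congr rfl fun i _ => binomQ_int _ _
  obtain ⟨c, hsupp, hid, hint⟩ := MV n D G hdegG
  have hczint := hint hGint
  have hswap : ∑ a ∈ Fintype.piFinset I, ∏ i, binomQ ((MvPolynomial.eval a (f i) : ℤ) : ℚ) (k i)
      = ∑ d ∈ Box n (D + 1), c d * ∏ j, (∑ y ∈ I j, binomQ ((y : ℤ) : ℚ) (d j)) := by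
    calc ∑ a ∈ Fintype.piFinset I, ∏ i, binomQ ((MvPolynomial.eval a (f i) : ℤ) : ℚ) (k i)
        = ∑ a ∈ Fintype.piFinset I, MvPolynomial.eval (fun j => ((a j : ℤ) : ℚ)) G :=
          Finset.sum_congr rfl fun a _ => (hevalG a).symm
      _ = ∑ a ∈ Fintype.piFinset I, ∑ d ∈ Box n (D + 1),
            c d * ∏ j, binomQ ((a j : ℤ) : ℚ) (d j) :=
          Finset.sum_congr rfl fun a _ => hid _
      _ = ∑ d ∈ Box n (D + 1), ∑ a ∈ Fintype.piFinset I,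
            c d * ∏ j, binomQ ((a j : ℤ) : ℚ) (d j) := Finset.sum_comm
      _ = ∑ d ∈ Box n (D + 1), c d * ∑ a ∈ Fintype.piFinset I,
            ∏ j, binomQ ((a j : ℤ) : ℚ) (d j) := by
          exact Finset.sum_congr rfl fun d _ => by rw [Finset.mul_sum]
      _ = ∑ d ∈ Box n (D + 1), c d * ∏ j, (∑ y ∈ I j, binomQ ((y : ℤ) : ℚ) (d j)) := by
          refine Finset.sum_congr rfl fun d _ => ?_
          rw [Finset.prod_univ_sum]
  have hper : ∀ d : Fin n → ℕ, ∃ u : ℤ,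
      c d * ∏ j, (∑ y ∈ I j, binomQ ((y : ℤ) : ℚ) (d j)) = (p : ℚ) ^ m * u := by
    intro d
    by_cases hc0 : c d = 0
    · exact ⟨0, by rw [hc0, zero_mul]; simp⟩
    obtain ⟨zc, hzc⟩ := hczint d
    have hsum := hsupp d hc0
    set Z : Fin n → ℤ := fun j => ∑ y ∈ I j, Ring.choose y (d j) with hZ
    have hSj : ∀ j, (∑ y ∈ I j, binomQ ((y : ℤ) : ℚ) (d j)) = ((Z j : ℤ) : ℚ) := by
      intro j
      rw [hZ]; push_cast
      exact Finset.sum_congr rfl fun y _ => binomQ_int y (d j)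
    set A : Finset (Fin n) := Finset.univ.filter (fun j => p - 1 ≤ d j) with hA
    have hp2 : 2 ≤ p := hp.two_le
    have hcardA : A.card * (p - 1) ≤ D := by
      calc A.card * (p - 1) = ∑ _j ∈ A, (p - 1) := by rw [Finset.sum_const, smul_eq_mul]
        _ ≤ ∑ j ∈ A, d j := Finset.sum_le_sum fun j hj => (Finset.mem_filter.mp hj).2
        _ ≤ ∑ j, d j := Finset.sum_le_sum_of_subset (Finset.subset_univ A)
        _ ≤ D := hsum
    have hcount : m + A.card ≤ n := by
      have hq1 : ((A.card : ℚ)) * ((p : ℚ) - 1) ≤ (D : ℚ) := by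
        have hcast : ((A.card * (p - 1) : ℕ) : ℚ) ≤ (D : ℚ) := Nat.cast_le.mpr hcardA
        push_cast [Nat.cast_sub (by omega : 1 ≤ p)] at hcast
        linarith
      have hppos : (0 : ℚ) < (p : ℚ) - 1 := by
        have : (2 : ℚ) ≤ p := by exact_mod_cast hp2
        linarith
      have h2 : (A.card : ℚ) < ((D : ℚ) + 1) / ((p : ℚ) - 1) := by
        rw [lt_div_iff₀ hppos]
        linarith
      have h3 : ((m + A.card : ℕ) : ℚ) < ((n + 1 : ℕ) : ℚ) := by
        push_cast
        linarith [hdeg]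
      have := Nat.cast_lt.mp h3
      omega
    have hdvd : (p : ℤ) ^ m ∣ ∏ j, Z j := by
      have h1 : ∏ j, Z j = (∏ j ∈ Aᶜ, Z j) * ∏ j ∈ A, Z j := by
        rw [mul_comm, Finset.prod_mul_prod_compl]
      have h2 : ((p : ℤ) ^ (Aᶜ.card)) ∣ ∏ j ∈ Aᶜ, Z j := by
        rw [← Finset.prod_const]
        refine Finset.prod_dvd_prod_of_dvd _ _ fun j hj => ?_
        have hj' : ¬(p - 1 ≤ d j) := by
          have := Finset.mem_compl.mp hj
          simpa [hA] using this
        exact sum_choose_dvd p hp (I j) (hcard j) (hres j) (d j) (by omega)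
      have h3 : m ≤ Aᶜ.card := by
        rw [Finset.card_compl, Fintype.card_fin]
        omega
      refine dvd_trans (pow_dvd_pow _ h3) (dvd_trans h2 ⟨∏ j ∈ A, Z j, h1⟩)
    obtain ⟨w, hw⟩ := hdvd
    refine ⟨zc * w, ?_⟩
    rw [hzc, Finset.prod_congr rfl fun j _ => hSj j]
    have : (∏ j, ((Z j : ℤ) : ℚ)) = ((∏ j, Z j : ℤ) : ℚ) := by push_cast; rfl
    rw [this, hw]
    push_cast
    ring
  choose u hu using hper
  refine ⟨∑ d ∈ Box n (D + 1), u d, ?_⟩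
  rw [hswap, Finset.sum_congr rfl fun d _ => hu d, ← Finset.mul_sum]
  push_cast
  rfl
end

section
/- Let m ≥ 1 and s ≥ 0 be integers, p a prime, w ∈ ℚ[X] an integer-valued polynomial of degree t ≥ 0, and f : ℤ → ℤ a map periodic with period p^s. Then there exists a polynomial g(X) = ∑_{n=0}^{d} a_n C(X,n) with all a_n ∈ ℤ and d < (t+1)p^s + (m−1)φ(p^s), such that g(x) ≡ w(⌊x/p^s⌋) f(x) mod p^m for all x ∈ ℤ, and such that p^ℓ divides a_n for each n ∈ [0,d], where ℓ = max{0, ⌈(n − (t+1)p^s + 1)/φ(p^s)⌉}. (Weighted Wilson's Lemma.) -/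
open Finset

section valuation
variable {p : ℕ} (hp : p.Prime)
include hp

lemma wl_choose_id (L j : ℕ) :
    p ^ L * (p ^ L - 1).choose j = (p ^ L).choose (j + 1) * (j + 1) := by
  have h := Nat.add_one_mul_choose_eq (p ^ L - 1) j
  have hL : 0 < p ^ L := pow_pos hp.pos L
  rw [← Nat.succ_pred_eq_of_pos hL]
  exact h

lemma wl_val_choose (L j : ℕ) (hj : j ≠ 0) :
    p ^ (L - (Nat.factorization j) p) ∣ (p ^ L).choose j := by
  set v := (Nat.factorization j) p with hv
  rcases le_or_gt L v with h | h
  · simp [Nat.sub_eq_zero_of_le h]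
  · obtain ⟨j', rfl⟩ := Nat.exists_eq_succ_of_ne_zero hj
    have hid := wl_choose_id hp L j'
    have hdvd : p ^ L ∣ (p ^ L).choose (j' + 1) * (j' + 1) := ⟨_, hid.symm⟩
    have hsplit : p ^ v * ((j' + 1) / p ^ v) = j' + 1 :=
      Nat.ordProj_mul_ordCompl_eq_self (j' + 1) p
    set c := (j' + 1) / p ^ v
    have h2 : p ^ v * p ^ (L - v) ∣ p ^ v * ((p ^ L).choose (j' + 1) * c) := by
      rw [← pow_add, Nat.add_sub_cancel' h.le]
      calc p ^ L ∣ (p ^ L).choose (j' + 1) * (j' + 1) := hdvd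
        _ = p ^ v * ((p ^ L).choose (j' + 1) * c) := by rw [← hsplit]; ring
    have h3 : p ^ (L - v) ∣ (p ^ L).choose (j' + 1) * c :=
      (mul_dvd_mul_iff_left (a := p ^ v) (pow_ne_zero v hp.pos.ne')).mp h2
    have hcop : Nat.Coprime (p ^ (L - v)) c :=
      Nat.Coprime.pow_left _ ((Nat.Prime.coprime_iff_not_dvd hp).mpr
        (Nat.not_dvd_ordCompl hp hj))
    exact hcop.dvd_of_dvd_mul_right h3

lemma wl_choose_dvd_big (L j D M : ℕ) (hj : j ≠ 0) (hjD : j ≤ D) (hL : M + D ≤ L) :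
    p ^ M ∣ (p ^ L).choose j := by
  have h1 : p ^ ((Nat.factorization j) p) ≤ j := Nat.ordProj_le p hj
  have h2 : (Nat.factorization j) p < p ^ ((Nat.factorization j) p) :=
    Nat.lt_pow_self hp.one_lt
  exact (pow_dvd_pow p (by omega)).trans (wl_val_choose hp L j hj)

lemma wl_tot_ineq_aux (s : ℕ) : ∀ r, r ≤ s → p ^ s - p ^ (s - r) ≤ r * (p ^ (s - 1) * (p - 1)) := by
  intro r
  induction r with
  | zero => simp
  | succ r IH =>
    intro hr
    rw [Nat.succ_mul]
    have h1 : p ^ s - p ^ (s - r) ≤ r * (p ^ (s - 1) * (p - 1)) := IH (by omega)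
    have h2 : p ^ (s - r) - p ^ (s - (r + 1)) ≤ p ^ (s - 1) * (p - 1) := by
      have hsr : s - r = (s - (r + 1)) + 1 := by omega
      rw [hsr, pow_succ]
      have : p ^ (s - (r+1)) * p - p ^ (s - (r+1)) = p ^ (s - (r+1)) * (p - 1) := by
        rw [Nat.mul_sub, mul_one]
      rw [this]
      exact Nat.mul_le_mul_right _ (Nat.pow_le_pow_right hp.pos (by omega))
    have h3 : p ^ (s - (r+1)) ≤ p ^ (s - r) := Nat.pow_le_pow_right hp.pos (by omega)
    have h4 : p ^ (s - r) ≤ p ^ s := Nat.pow_le_pow_right hp.pos (by omega)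
    omega

lemma wl_choose_dvd_tot (s j k : ℕ) (hj1 : j ≠ 0) (hj2 : j < p ^ s)
    (hk : k * (p ^ s).totient < j) : p ^ (k + 1) ∣ (p ^ s).choose j := by
  set v := (Nat.factorization j) p with hv
  have hpv : p ^ v ∣ j := Nat.ordProj_dvd j p
  have hple : p ^ v ≤ j := Nat.ordProj_le p hj1
  have hvs : v < s := by
    by_contra hcon
    exact absurd (lt_of_le_of_lt hple hj2)
      (not_lt.mpr (Nat.pow_le_pow_right hp.pos (by omega)))
  have hjb : j ≤ p ^ s - p ^ v := by
    have hd : p ^ v ∣ p ^ s - j := (Nat.dvd_sub (pow_dvd_pow p hvs.le) hpv)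
    have : p ^ v ≤ p ^ s - j := Nat.le_of_dvd (by omega) hd
    omega
  have h0 : 0 < s := by omega
  have htot : (p ^ s).totient = p ^ (s - 1) * (p - 1) := Nat.totient_prime_pow hp h0
  have hineq : p ^ s - p ^ v ≤ (s - v) * (p ^ s).totient := by
    rw [htot]
    have := wl_tot_ineq_aux hp s (s - v) (by omega)
    rwa [Nat.sub_sub_self hvs.le] at this
  have hks : k < s - v := by
    have htpos : 0 < (p ^ s).totient := Nat.totient_pos.mpr (pow_pos hp.pos s)
    by_contra hcon
    have : (s - v) * (p ^ s).totient ≤ k * (p ^ s).totient :=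
      Nat.mul_le_mul_right _ (by omega)
    omega
  exact (pow_dvd_pow p (by omega)).trans (wl_val_choose hp s j hj1)

end valuation

open Finset fwdDiff Polynomial

lemma wl_iter_zero {M G : Type*} [AddCommMonoid M] [AddCommGroup G] (h : M) (c : ℕ) :
    (fwdDiff h)^[c] (0 : M → G) = 0 := by
  induction c with
  | zero => rfl
  | succ c IH => rw [Function.iterate_succ_apply, show fwdDiff h (0 : M → G) = 0 from funext fun _ => sub_self _, IH]

lemma wl_iter_zero_of_le {M G : Type*} [AddCommMonoid M] [AddCommGroup G] (h : M) (g : M → G)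
    {a b : ℕ} (hab : a ≤ b) (hg : (fwdDiff h)^[a] g = 0) : (fwdDiff h)^[b] g = 0 := by
  obtain ⟨c, rfl⟩ := Nat.exists_eq_add_of_le hab
  rw [Nat.add_comm, Function.iterate_add_apply, hg, wl_iter_zero]

lemma wl_polydiff : ∀ (n : ℕ) (q : Polynomial ℚ), q.natDegree ≤ n →
    (fwdDiff (1:ℤ))^[n + 1] (fun y : ℤ => q.eval (y : ℚ)) = 0 := by
  intro n
  induction n with
  | zero =>
    intro q hq
    have hc : q = Polynomial.C (q.coeff 0) := Polynomial.eq_C_of_natDegree_le_zero hq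
    funext x
    rw [Function.iterate_one, hc]
    simp [fwdDiff]
  | succ n IH =>
    intro q hq
    have hstep : fwdDiff (1:ℤ) (fun y : ℤ => q.eval (y:ℚ))
        = fun y : ℤ => (q.comp (Polynomial.X + Polynomial.C 1) - q).eval (y:ℚ) := by
      funext y
      simp only [fwdDiff, Polynomial.eval_sub, Polynomial.eval_comp, Polynomial.eval_add,
        Polynomial.eval_X, Polynomial.eval_C]
      push_cast
      ring
    have hdeg : (q.comp (Polynomial.X + Polynomial.C 1) - q).natDegree ≤ n := by
      rcases Nat.eq_zero_or_pos q.natDegree with h0 | hpos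
      · have hc : q = Polynomial.C (q.coeff 0) := Polynomial.eq_C_of_natDegree_le_zero h0.le
        rw [hc]
        simp
      · rw [Polynomial.natDegree_le_iff_coeff_eq_zero]
        intro mm hmm
        have hX1 : (Polynomial.X + Polynomial.C 1 : Polynomial ℚ).natDegree = 1 := by
          simpa using Polynomial.natDegree_X_add_C (1:ℚ)
        have hcompdeg : (q.comp (Polynomial.X + Polynomial.C 1)).natDegree = q.natDegree := by
          rw [Polynomial.natDegree_comp, hX1, mul_one]
        rw [Polynomial.coeff_sub]
        rcases Nat.lt_or_ge q.natDegree mm with hlt | hge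
        · rw [Polynomial.coeff_eq_zero_of_natDegree_lt (hcompdeg ▸ hlt),
            Polynomial.coeff_eq_zero_of_natDegree_lt hlt, sub_self]
        · have heq : mm = q.natDegree := by omega
          subst heq
          have hlc : (q.comp (Polynomial.X + Polynomial.C 1)).coeff q.natDegree
              = q.leadingCoeff := by
            have := Polynomial.leadingCoeff_comp (p := q)
              (q := Polynomial.X + Polynomial.C 1) (by rw [hX1]; exact one_ne_zero)
            rw [Polynomial.leadingCoeff, hcompdeg] at this
            rw [this]
            have : (Polynomial.X + Polynomial.C 1 : Polynomial ℚ).leadingCoeff = 1 := by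
              rw [Polynomial.leadingCoeff_X_add_C]
            rw [this, one_pow, mul_one]
          rw [hlc, Polynomial.leadingCoeff, sub_self]
    rw [Function.iterate_succ_apply, hstep]
    exact IH _ hdeg

open Finset Polynomial

lemma wl_descPoch_prod (x : ℚ) (n : ℕ) :
    (descPochhammer ℚ n).eval x = ∏ j ∈ Finset.range n, (x - j) := by
  induction n with
  | zero => simp
  | succ n IH => rw [descPochhammer_succ_eval, IH, Finset.prod_range_succ]

lemma wl_binomQ_eq (x : ℤ) (n : ℕ) : binomQ (x : ℚ) n = ((Ring.choose x n : ℤ) : ℚ) := by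
  have h1 : (descPochhammer ℤ n).eval x = (n.factorial : ℤ) * Ring.choose x n := by
    rw [Polynomial.eval_eq_smeval]
    rw [Ring.descPochhammer_eq_factorial_smul_choose x n, nsmul_eq_mul]
  have h2 : (((descPochhammer ℤ n).eval x : ℤ) : ℚ) = (descPochhammer ℚ n).eval (x : ℚ) := by
    exact_mod_cast descPochhammer_eval_cast (R := ℚ) n x
  rw [binomQ, ← wl_descPoch_prod, ← h2, h1]
  push_cast
  rw [mul_comm, mul_div_assoc, div_self (by exact_mod_cast n.factorial_ne_zero), mul_one]

lemma wl_rchoose_nat (x n : ℕ) : Ring.choose (x : ℤ) n = (x.choose n : ℤ) := by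
  exact_mod_cast Ring.choose_natCast (R := ℤ) x n

lemma wl_rchoose_add (x y : ℤ) (n : ℕ) :
    Ring.choose (x + y) n = ∑ ij ∈ Finset.HasAntidiagonal.antidiagonal n, Ring.choose x ij.1 * Ring.choose y ij.2 :=
  Ring.add_choose_eq n (Commute.all x y)

lemma wl_rchoose_zero (x : ℤ) : Ring.choose x 0 = 1 := Ring.choose_zero_right x

open Finset Polynomial

-- T operator
noncomputable def wlT (G : ℤ → ℤ) (n : ℕ) : ℤ := (fwdDiff (1:ℤ))^[n] G 0

lemma wl_fwdDiff_comm (h h' : ℤ) (g : ℤ → ℤ) :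
    fwdDiff h (fwdDiff h' g) = fwdDiff h' (fwdDiff h g) := by
  funext x
  simp only [fwdDiff]
  have : x + h + h' = x + h' + h := by ring
  rw [this]
  ring

lemma wl_fwdDiff_comm_iter (h : ℤ) (i : ℕ) (g : ℤ → ℤ) :
    (fwdDiff (1:ℤ))^[i] (fwdDiff h g) = fwdDiff h ((fwdDiff (1:ℤ))^[i] g) := by
  induction i with
  | zero => rfl
  | succ i IH =>
    rw [Function.iterate_succ_apply', Function.iterate_succ_apply', IH, wl_fwdDiff_comm]

/-- single step: convolution with the coefficients of `(1+X)^N - X^N`. -/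
lemma wl_step (N : ℕ) (hN : 0 < N) (G : ℤ → ℤ) (k : ℕ) (hk : N ≤ k) :
    ∑ a ∈ Finset.range N, (N.choose a : ℤ) * wlT G (k - a)
      = wlT (fwdDiff ((N : ℤ)) G) (k - N) := by
  set g : ℤ → ℤ := (fwdDiff (1:ℤ))^[k - N] G with hg
  have hRHS : wlT (fwdDiff ((N:ℤ)) G) (k - N) = g ((N:ℤ)) - g 0 := by
    rw [wlT, wl_fwdDiff_comm_iter]
    simp only [fwdDiff, ← hg, zero_add]
  have hNewton : g ((N:ℤ)) = ∑ j ∈ Finset.range (N + 1), (N.choose j : ℤ) * wlT G (k - N + j) := by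
    have h0 : g ((0:ℤ) + N • (1:ℤ)) = ∑ j ∈ Finset.range (N + 1), N.choose j • (fwdDiff (1:ℤ))^[j] g 0 :=
      shift_eq_sum_fwdDiff_iter (1:ℤ) g N 0
    simp only [smul_eq_mul, mul_one, zero_add, nsmul_eq_mul] at h0
    rw [h0]
    refine Finset.sum_congr rfl fun j hj => ?_
    rw [hg, ← Function.iterate_add_apply, wlT, Nat.add_comm]
  have hg0 : g 0 = wlT G (k - N) := rfl
  rw [hRHS, hNewton, hg0]
  rw [Finset.sum_range_succ' (fun j => (N.choose j : ℤ) * wlT G (k - N + j)) N]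
  simp only [Nat.choose_zero_right, Nat.cast_one, one_mul, Nat.add_zero, add_zero]
  rw [add_sub_cancel_right]
  rw [← Finset.sum_range_reflect]
  refine Finset.sum_congr rfl fun x hx => ?_
  have hxN : x < N := Finset.mem_range.mp hx
  have h1 : N - 1 - x + 1 ≤ N := by omega
  rw [show N - 1 - x = N - (x + 1) by omega, Nat.choose_symm (by omega : x + 1 ≤ N)]
  congr 2
  omega

-- ceil div helper facts
lemma wl_ceil_facts (φ a : ℕ) (hφ : 0 < φ) :
    a ≤ ((a + φ - 1) / φ) * φ ∧ (((a + φ - 1) / φ) = 0 → a = 0) ∧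
      (∀ kk, ((a + φ - 1) / φ) = kk + 1 → kk * φ < a) := by
  have h1 := Nat.div_add_mod (a + φ - 1) φ
  have h2 := Nat.mod_lt (a + φ - 1) hφ
  refine ⟨?_, ?_, ?_⟩
  · rw [Nat.mul_comm]
    generalize hQ : φ * ((a + φ - 1) / φ) = Q at h1 ⊢
    omega
  · intro h0; rw [h0, Nat.mul_zero] at h1; omega
  · intro kk hkk
    rw [hkk, Nat.mul_succ] at h1
    rw [Nat.mul_comm]
    generalize hQ : φ * kk = Q at h1 ⊢
    omega

/-- S0-property is closed under polynomial multiplication. -/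
lemma wl_S0_mul (p φ : ℕ) (hφ : 0 < φ) (A B : Polynomial ℤ)
    (hA : ∀ j k, k * φ < j → (p:ℤ)^(k+1) ∣ A.coeff j)
    (hB : ∀ j k, k * φ < j → (p:ℤ)^(k+1) ∣ B.coeff j) :
    ∀ j k, k * φ < j → (p:ℤ)^(k+1) ∣ (A * B).coeff j := by
  intro j k hj
  rw [Polynomial.coeff_mul]
  refine Finset.dvd_sum fun ij hij => ?_
  have hsum : ij.1 + ij.2 = j := Finset.HasAntidiagonal.mem_antidiagonal.mp hij
  obtain ⟨haa, haz, hak⟩ := wl_ceil_facts φ ij.1 hφ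
  obtain ⟨hbb, hbz, hbk⟩ := wl_ceil_facts φ ij.2 hφ
  have hdA : (p:ℤ)^((ij.1 + φ - 1) / φ) ∣ A.coeff ij.1 := by
    rcases Nat.eq_zero_or_pos ((ij.1 + φ - 1) / φ) with h0 | hpos
    · rw [h0]; simp
    · rcases Nat.exists_eq_succ_of_ne_zero hpos.ne' with ⟨kk, hkk⟩
      rw [hkk]; exact hA ij.1 kk (hak kk hkk)
  have hdB : (p:ℤ)^((ij.2 + φ - 1) / φ) ∣ B.coeff ij.2 := by
    rcases Nat.eq_zero_or_pos ((ij.2 + φ - 1) / φ) with h0 | hpos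
    · rw [h0]; simp
    · rcases Nat.exists_eq_succ_of_ne_zero hpos.ne' with ⟨kk, hkk⟩
      rw [hkk]; exact hB ij.2 kk (hbk kk hkk)
  have hk1 : k + 1 ≤ (ij.1 + φ - 1) / φ + (ij.2 + φ - 1) / φ := by
    have hlt : k * φ < ((ij.1 + φ - 1) / φ + (ij.2 + φ - 1) / φ) * φ := by
      calc k * φ < j := hj
        _ = ij.1 + ij.2 := hsum.symm
        _ ≤ ((ij.1 + φ - 1) / φ) * φ + ((ij.2 + φ - 1) / φ) * φ := Nat.add_le_add haa hbb
        _ = ((ij.1 + φ - 1) / φ + (ij.2 + φ - 1) / φ) * φ := (Nat.add_mul _ _ _).symm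
    have := Nat.lt_of_mul_lt_mul_right hlt
    omega
  calc ((p:ℤ))^(k+1) ∣ (p:ℤ)^((ij.1 + φ - 1) / φ + (ij.2 + φ - 1) / φ) := pow_dvd_pow _ hk1
    _ = (p:ℤ)^((ij.1 + φ - 1) / φ) * (p:ℤ)^((ij.2 + φ - 1) / φ) := pow_add _ _ _
    _ ∣ A.coeff ij.1 * B.coeff ij.2 := mul_dvd_mul hdA hdB

noncomputable def wlu (N : ℕ) : Polynomial ℤ := (1 + Polynomial.X)^N - Polynomial.X^N

lemma wlu_coeff (N j : ℕ) :
    (wlu N).coeff j = if j < N then (N.choose j : ℤ) else 0 := by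
  rw [wlu, Polynomial.coeff_sub, Polynomial.coeff_one_add_X_pow, Polynomial.coeff_X_pow]
  rcases lt_trichotomy j N with h | rfl | h
  · rw [if_neg (by omega : ¬ j = N), if_pos h, sub_zero]
  · rw [if_pos rfl, if_neg (lt_irrefl j), Nat.choose_self]; norm_num
  · rw [if_neg (by omega : ¬ j = N), if_neg (by omega), Nat.choose_eq_zero_of_lt h, sub_zero]
    norm_num

lemma wlU_coeff_zero (N i : ℕ) (hN : 0 < N) : ((wlu N)^i).coeff 0 = 1 := by
  rw [Polynomial.coeff_zero_eq_eval_zero, Polynomial.eval_pow, wlu]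
  simp [zero_pow hN.ne']

lemma wlU_S0 {p : ℕ} (hp : p.Prime) (s i : ℕ) :
    ∀ j k, k * (p^s).totient < j → (p:ℤ)^(k+1) ∣ ((wlu (p^s))^i).coeff j := by
  have hφ : 0 < (p^s).totient := Nat.totient_pos.mpr (pow_pos hp.pos s)
  induction i with
  | zero =>
    intro j k hj
    rw [pow_zero, Polynomial.coeff_one, if_neg (by omega)]
    exact dvd_zero _
  | succ i IH =>
    rw [pow_succ]
    refine wl_S0_mul p _ hφ _ _ IH ?_
    intro j k hj
    rw [wlu_coeff]
    split_ifs with h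
    · have hj0 : j ≠ 0 := by omega
      exact_mod_cast Int.natCast_dvd_natCast.mpr (wl_choose_dvd_tot hp s j k hj0 h hj)
    · exact dvd_zero _

lemma wl_convA (N : ℕ) (hN : 0 < N) (F : ℤ → ℤ) (i : ℕ) :
    ∀ n, i * N ≤ n →
      (PowerSeries.coeff n) ((((wlu N)^i : Polynomial ℤ) : PowerSeries ℤ) * PowerSeries.mk (wlT F))
        = wlT ((fwdDiff ((N:ℤ)))^[i] F) (n - i * N) := by
  induction i with
  | zero =>
    intro n _
    simp only [pow_zero, Polynomial.coe_one, one_mul, PowerSeries.coeff_mk,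
      Function.iterate_zero, id_eq, Nat.zero_mul, Nat.sub_zero]
  | succ i IH =>
    intro n hn
    rw [Nat.succ_mul] at hn
    have hmul : (((wlu N)^(i+1) : Polynomial ℤ) : PowerSeries ℤ)
        = ((wlu N : Polynomial ℤ) : PowerSeries ℤ) * (((wlu N)^i : Polynomial ℤ) : PowerSeries ℤ) := by
      rw [← Polynomial.coe_mul]
      norm_cast
      ring
    rw [hmul, mul_assoc, PowerSeries.coeff_mul]
    have hterm : ∀ ij ∈ Finset.HasAntidiagonal.antidiagonal n,
        (PowerSeries.coeff ij.1) ((wlu N : Polynomial ℤ) : PowerSeries ℤ)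
          * (PowerSeries.coeff ij.2) ((((wlu N)^i : Polynomial ℤ) : PowerSeries ℤ) * PowerSeries.mk (wlT F))
        = (if ij.1 < N then (N.choose ij.1 : ℤ) else 0)
            * wlT ((fwdDiff ((N:ℤ)))^[i] F) (ij.2 - i * N) := by
      intro ij hij
      have hsum := Finset.HasAntidiagonal.mem_antidiagonal.mp hij
      rw [Polynomial.coeff_coe, wlu_coeff]
      split_ifs with h
      · rw [IH ij.2 (by omega)]
      · rw [zero_mul, zero_mul]
    rw [Finset.sum_congr rfl hterm, Finset.Nat.sum_antidiagonal_eq_sum_range_succ_mk]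
    have hsub : ∑ a ∈ Finset.range (n+1),
        (if a < N then (N.choose a : ℤ) else 0) * wlT ((fwdDiff ((N:ℤ)))^[i] F) (n - a - i * N)
        = ∑ a ∈ Finset.range N, (N.choose a : ℤ) * wlT ((fwdDiff ((N:ℤ)))^[i] F) ((n - i * N) - a) := by
      rw [← Finset.sum_subset (Finset.range_subset_range.mpr (by omega : N ≤ n + 1))]
      · refine Finset.sum_congr rfl fun a ha => ?_
        have haN := Finset.mem_range.mp ha
        rw [if_pos haN, Nat.sub_right_comm]
      · intro x hx hnx
        rw [if_neg (by simpa using hnx), zero_mul]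
    rw [hsub, wl_step N hN _ (n - i * N) (by omega)]
    have hit : fwdDiff ((N:ℤ)) ((fwdDiff ((N:ℤ)))^[i] F) = (fwdDiff ((N:ℤ)))^[i+1] F :=
      (Function.iterate_succ_apply' (fwdDiff ((N:ℤ))) i F).symm
    rw [hit]
    congr 1
    have : (i+1) * N = i * N + N := Nat.succ_mul i N
    omega

lemma wl_conv_vanish (N : ℕ) (hN : 0 < N) (F : ℤ → ℤ) (t : ℕ)
    (hF : (fwdDiff ((N:ℤ)))^[t+1] F = 0) :
    ∀ n, (t+1) * N ≤ n →
      (PowerSeries.coeff n) ((((wlu N)^(t+1) : Polynomial ℤ) : PowerSeries ℤ) * PowerSeries.mk (wlT F)) = 0 := by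
  intro n hn
  rw [wl_convA N hN F (t+1) n hn, hF, wlT]
  have : (fwdDiff (1:ℤ))^[n - (t+1)*N] (0 : ℤ → ℤ) = 0 := wl_iter_zero 1 _
  rw [this]
  rfl

lemma wl_main_val {p : ℕ} (hp : p.Prime) (s t : ℕ) (F : ℤ → ℤ)
    (hF : (fwdDiff (((p^s : ℕ)):ℤ))^[t+1] F = 0) :
    ∀ n k, ((t+1) * p^s - 1) + k * (p^s).totient < n → (p:ℤ)^(k+1) ∣ wlT F n := by
  have hN : 0 < p ^ s := pow_pos hp.pos s
  have hφ : 0 < (p^s).totient := Nat.totient_pos.mpr hN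
  intro n
  induction n using Nat.strong_induction_on with
  | _ n IH =>
    intro k hk
    have hn1 : (t+1) * p^s ≤ n := by
      have : 0 < (t+1) * p^s := Nat.mul_pos (Nat.succ_pos t) hN
      omega
    have hvan := wl_conv_vanish (p^s) hN F t hF n hn1
    rw [PowerSeries.coeff_mul, Finset.Nat.sum_antidiagonal_eq_sum_range_succ_mk] at hvan
    simp only [Polynomial.coeff_coe, PowerSeries.coeff_mk] at hvan
    rw [Finset.sum_range_succ' (fun a => ((wlu (p^s))^(t+1)).coeff a * wlT F (n - a)) n] at hvan
    rw [wlU_coeff_zero (p^s) (t+1) hN, one_mul, Nat.sub_zero] at hvan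
    have hTn : wlT F n = -∑ i ∈ Finset.range n, ((wlu (p^s))^(t+1)).coeff (i+1) * wlT F (n - (i+1)) := by
      omega
    rw [hTn]
    refine dvd_neg.mpr (Finset.dvd_sum fun i hi => ?_)
    set j := i + 1 with hj
    obtain ⟨haa, haz, hak⟩ := wl_ceil_facts ((p^s).totient) j hφ
    set ca := (j + (p^s).totient - 1) / (p^s).totient with hca
    have hca1 : 1 ≤ ca := by
      rcases Nat.eq_zero_or_pos ca with h0 | h; · exact absurd (haz h0) (by omega)
      · exact h
    have hdU : (p:ℤ)^ca ∣ ((wlu (p^s))^(t+1)).coeff j := by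
      rcases Nat.exists_eq_succ_of_ne_zero (Nat.one_le_iff_ne_zero.mp hca1) with ⟨kk, hkk⟩
      rw [hkk]
      exact wlU_S0 hp s (t+1) j kk (hak kk hkk)
    rcases Nat.lt_or_ge k ca with hcase | hcase
    · -- ca ≥ k+1
      exact dvd_mul_of_dvd_left ((pow_dvd_pow _ (by omega)).trans hdU) _
    · -- ca ≤ k
      have hkphi : k * (p^s).totient = (k - ca) * (p^s).totient + ca * (p^s).totient := by
        rw [← Nat.add_mul]
        congr 1
        omega
      have hrec : ((t+1) * p^s - 1) + (k - ca) * (p^s).totient < n - j := by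
        have hja : j ≤ ca * (p^s).totient := haa
        omega
      have hdT : (p:ℤ)^((k - ca)+1) ∣ wlT F (n - j) := IH (n - j) (by omega) (k - ca) hrec
      have hsplit : (p:ℤ)^(k+1) = (p:ℤ)^ca * (p:ℤ)^((k - ca)+1) := by
        rw [← pow_add]
        congr 1
        omega
      rw [hsplit]
      exact mul_dvd_mul hdU hdT

lemma wl_tail_val {p : ℕ} (hp : p.Prime) (s t m : ℕ) (F : ℤ → ℤ)
    (hF : (fwdDiff (((p^s : ℕ)):ℤ))^[t+1] F = 0) (hm : 1 ≤ m) :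
    ∀ n, (t+1) * p^s + (m-1) * (p^s).totient ≤ n → (p:ℤ)^m ∣ wlT F n := by
  intro n hn
  have := wl_main_val hp s t F hF n (m-1) (by
    have : 0 < (t+1) * p^s := Nat.mul_pos (Nat.succ_pos t) (pow_pos hp.pos s)
    omega)
  rwa [show m - 1 + 1 = m by omega] at this

lemma wl_newton_nat (F : ℤ → ℤ) (x : ℕ) :
    F (x : ℤ) = ∑ n ∈ Finset.range (x+1), (x.choose n : ℤ) * wlT F n := by
  have h := shift_eq_sum_fwdDiff_iter (1:ℤ) F x 0
  simp only [nsmul_eq_mul, smul_eq_mul, mul_one, zero_add] at h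
  rw [h]
  rfl

lemma wl_rchoose_shift {p : ℕ} (hp : p.Prime) (L n m : ℕ) (hL : m + n ≤ L) (x : ℤ) :
    (p:ℤ)^m ∣ Ring.choose (x + ((p^L : ℕ) : ℤ)) n - Ring.choose x n := by
  rw [wl_rchoose_add, Finset.Nat.sum_antidiagonal_eq_sum_range_succ_mk, Finset.sum_range_succ,
    Nat.sub_self, Ring.choose_zero_right, mul_one, add_sub_cancel_right]
  refine Finset.dvd_sum fun k hk => ?_
  have hk' := Finset.mem_range.mp hk
  rw [wl_rchoose_nat]
  refine Dvd.dvd.mul_left ?_ _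
  have : (p:ℤ)^m = ((p^m : ℕ) : ℤ) := by push_cast; ring
  rw [this]
  exact Int.natCast_dvd_natCast.mpr (wl_choose_dvd_big hp L (n-k) n m (by omega) (by omega) hL)

lemma wl_W_shift {p : ℕ} (hp : p.Prime) (t m M : ℕ) (hM : m + t ≤ M) (W : ℤ → ℤ)
    (hW : (fwdDiff (1:ℤ))^[t+1] W = 0) (y : ℤ) :
    (p:ℤ)^m ∣ W (y + ((p^M : ℕ) : ℤ)) - W y := by
  have hshift := shift_eq_sum_fwdDiff_iter (1:ℤ) W (p^M) y
  simp only [nsmul_eq_mul, smul_eq_mul, mul_one] at hshift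
  have hMp : t ≤ p ^ M := le_trans (by omega) (Nat.lt_pow_self (n := M) hp.one_lt).le
  have hzero : ∀ k, t + 1 ≤ k → (fwdDiff (1:ℤ))^[k] W = 0 :=
    fun k hk => wl_iter_zero_of_le _ _ hk hW
  have htrunc : ∑ k ∈ Finset.range (p^M + 1), ((p^M).choose k : ℤ) * (fwdDiff (1:ℤ))^[k] W y
      = ∑ k ∈ Finset.range (t+1), ((p^M).choose k : ℤ) * (fwdDiff (1:ℤ))^[k] W y := by
    rw [← Finset.sum_subset (Finset.range_subset_range.mpr (by omega : t + 1 ≤ p^M + 1))]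
    intro k _ hk2
    rw [hzero k (by simpa using hk2)]
    simp
  rw [hshift, htrunc, Finset.sum_range_succ' (fun k => ((p^M).choose k : ℤ) * (fwdDiff (1:ℤ))^[k] W y) t]
  simp only [Nat.choose_zero_right, Nat.cast_one, one_mul, Function.iterate_zero, id_eq]
  rw [add_sub_cancel_right]
  refine Finset.dvd_sum fun i hi => ?_
  have hi' := Finset.mem_range.mp hi
  refine Dvd.dvd.mul_right ?_ _
  have : (p:ℤ)^m = ((p^m : ℕ) : ℤ) := by push_cast; ring
  rw [this]
  exact Int.natCast_dvd_natCast.mpr (wl_choose_dvd_big hp M (i+1) t m (by omega) (by omega) hM)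

lemma wl_f_shift (p s : ℕ) (f : ℤ → ℤ) (hf : ∀ x, f (x + (p:ℤ)^s) = f x) :
    ∀ (c : ℕ) (x : ℤ), f (x + (c : ℤ) * (p:ℤ)^s) = f x := by
  intro c
  induction c with
  | zero => intro x; simp
  | succ c IH =>
    intro x
    have h : x + ((c:ℕ)+1 : ℤ) * (p:ℤ)^s = (x + (p:ℤ)^s) + (c : ℤ) * (p:ℤ)^s := by ring
    push_cast
    rw [h, IH, hf]

lemma wl_fwdDiff_cast (h : ℤ) (g : ℤ → ℤ) (n : ℕ) :
    (fwdDiff h)^[n] (fun x => ((g x : ℤ) : ℚ)) = fun x => (((fwdDiff h)^[n] g x : ℤ) : ℚ) := by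
  induction n with
  | zero => rfl
  | succ n IH =>
    rw [Function.iterate_succ_apply', IH, Function.iterate_succ_apply']
    funext x
    simp only [fwdDiff]
    push_cast
    ring

theorem stmt8 (p : ℕ) (hp : p.Prime) (m s : ℕ) (hm : 1 ≤ m)
    (w : Polynomial ℚ) (hw : ∀ a : ℤ, ∃ z : ℤ, w.eval ((a : ℤ) : ℚ) = z)
    (t : ℕ) (ht : w.natDegree = t) (hw0 : w ≠ 0)
    (f : ℤ → ℤ) (hf : ∀ x : ℤ, f (x + (p : ℤ) ^ s) = f x) :
    ∃ (d : ℕ) (a : ℕ → ℤ),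
      d < (t + 1) * p ^ s + (m - 1) * Nat.totient (p ^ s) ∧
      (∀ x : ℤ, ∃ z : ℤ,
        (∑ n ∈ Finset.range (d + 1), (a n : ℚ) * binomQ ((x : ℤ) : ℚ) n)
          - w.eval ((Int.fdiv x ((p : ℤ) ^ s) : ℤ) : ℚ) * (f x : ℚ)
        = (p : ℚ) ^ m * z) ∧
      (∀ n ∈ Finset.range (d + 1),
        (p : ℤ) ^ ((max 0
            ⌈(((n : ℚ) - ((t : ℚ) + 1) * (p : ℚ) ^ s + 1) / (Nat.totient (p ^ s) : ℚ))⌉).toNat)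
          ∣ a n) := by
  classical
  have hN : 0 < p ^ s := pow_pos hp.pos s
  have hφ : 0 < (p ^ s).totient := Nat.totient_pos.mpr hN
  have hNz : (0:ℤ) < (p:ℤ)^s := by exact_mod_cast hN
  have hcast : ((p^s : ℕ) : ℤ) = (p:ℤ)^s := by push_cast; ring
  choose W hWspec using hw
  have hWd : (fwdDiff (1:ℤ))^[t+1] W = 0 := by
    have h1 : (fwdDiff (1:ℤ))^[t+1] (fun y : ℤ => w.eval (y:ℚ)) = 0 := by
      have := wl_polydiff t w (by rw [ht])
      exact this
    have h2 : (fun y : ℤ => w.eval (y:ℚ)) = fun y : ℤ => ((W y : ℤ) : ℚ) :=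
      funext fun y => hWspec y
    rw [h2, wl_fwdDiff_cast] at h1
    funext y
    have h3 := congrFun h1 y
    simpa using h3
  set F : ℤ → ℤ := fun x => W (x.fdiv ((p:ℤ)^s)) * f x with hFdef
  have hFi : ∀ i, (fwdDiff (((p^s : ℕ)):ℤ))^[i] F
      = fun x => ((fwdDiff (1:ℤ))^[i] W) (x.fdiv ((p:ℤ)^s)) * f x := by
    intro i
    induction i with
    | zero => rfl
    | succ i IH =>
      rw [Function.iterate_succ_apply', IH]
      funext x
      have hfd : (x + ((p^s : ℕ):ℤ)).fdiv ((p:ℤ)^s) = x.fdiv ((p:ℤ)^s) + 1 := by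
        rw [hcast, Int.fdiv_eq_ediv_of_nonneg _ hNz.le, Int.fdiv_eq_ediv_of_nonneg _ hNz.le]
        have h := Int.add_mul_ediv_right x 1 hNz.ne'
        simpa using h
      rw [show (fwdDiff (1:ℤ))^[i+1] W = fwdDiff 1 ((fwdDiff (1:ℤ))^[i] W) from
        Function.iterate_succ_apply' _ _ _]
      simp only [fwdDiff]
      rw [hfd, hcast, hf x]
      ring
  have hFrec : (fwdDiff (((p^s : ℕ)):ℤ))^[t+1] F = 0 := by
    rw [hFi (t+1), hWd]
    funext x
    simp
  set d : ℕ := (t+1) * p^s + (m-1) * (p^s).totient - 1 with hddef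
  have hdpos : (t+1) * p^s + (m-1) * (p^s).totient = d + 1 := by
    have h1 : 0 < (t+1) * p^s := Nat.mul_pos (Nat.succ_pos t) hN
    omega
  refine ⟨d, wlT F, by omega, ?_, ?_⟩
  · -- congruence
    intro x
    set L : ℕ := s + m + t + d + 1 with hLdef
    set Q : ℤ := ((p^L : ℕ) : ℤ) with hQdef
    have hQ1 : 1 ≤ Q := by
      rw [hQdef]
      exact_mod_cast Nat.one_le_iff_ne_zero.mpr (pow_ne_zero L hp.pos.ne')
    set gZ : ℤ → ℤ := fun y => ∑ n ∈ Finset.range (d+1), wlT F n * Ring.choose y n with hgZ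
    have hg_per : ∀ y : ℤ, (p:ℤ)^m ∣ gZ (y + Q) - gZ y := by
      intro y
      rw [hgZ]
      simp only
      rw [← Finset.sum_sub_distrib]
      refine Finset.dvd_sum fun n hn => ?_
      have hn' := Finset.mem_range.mp hn
      rw [← mul_sub]
      exact Dvd.dvd.mul_left (wl_rchoose_shift hp L n m (by omega) y) _
    have hQsplit : Q = ((p^(L-s) : ℕ) : ℤ) * (p:ℤ)^s := by
      rw [hQdef]
      push_cast
      rw [← pow_add]
      congr 1
      omega
    have hF_per : ∀ y : ℤ, (p:ℤ)^m ∣ F (y + Q) - F y := by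
      intro y
      have hfQ : f (y + Q) = f y := by
        rw [hQsplit]
        exact wl_f_shift p s f hf (p^(L-s)) y
      have hfd2 : (y + Q).fdiv ((p:ℤ)^s) = y.fdiv ((p:ℤ)^s) + ((p^(L-s):ℕ):ℤ) := by
        rw [Int.fdiv_eq_ediv_of_nonneg _ hNz.le, Int.fdiv_eq_ediv_of_nonneg _ hNz.le, hQsplit,
          Int.add_mul_ediv_right _ _ hNz.ne']
      rw [hFdef]
      simp only
      rw [hfQ, hfd2, ← sub_mul]
      exact Dvd.dvd.mul_right (wl_W_shift hp t m (L-s) (by omega) W hWd _) _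
    have hnat : ∀ y : ℕ, (p:ℤ)^m ∣ gZ (y:ℤ) - F (y:ℤ) := by
      intro y
      have hgy : gZ (y:ℤ) = ∑ n ∈ Finset.range (d+1), wlT F n * (y.choose n : ℤ) := by
        rw [hgZ]
        exact Finset.sum_congr rfl fun n _ => by rw [wl_rchoose_nat]
      have hFy : F (y:ℤ) = ∑ n ∈ Finset.range (max y d + 1), (y.choose n : ℤ) * wlT F n := by
        rw [wl_newton_nat F y, ← Finset.sum_subset
          (Finset.range_subset_range.mpr (by omega : y + 1 ≤ max y d + 1))]
        intro k _ hk2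
        have : y < k := by simpa using hk2
        rw [Nat.choose_eq_zero_of_lt this]
        simp
      have hsplit : ∑ n ∈ Finset.range (d+1), wlT F n * (y.choose n : ℤ)
          + ∑ n ∈ Finset.Ico (d+1) (max y d + 1), wlT F n * (y.choose n : ℤ)
          = ∑ n ∈ Finset.range (max y d + 1), wlT F n * (y.choose n : ℤ) := by
        simp only [Finset.range_eq_Ico]
        exact Finset.sum_Ico_consecutive _ (by omega) (by omega)
      have hcomm : ∑ n ∈ Finset.range (max y d + 1), (y.choose n : ℤ) * wlT F n
          = ∑ n ∈ Finset.range (max y d + 1), wlT F n * (y.choose n : ℤ) :=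
        Finset.sum_congr rfl fun n _ => mul_comm _ _
      have hdiff : gZ (y:ℤ) - F (y:ℤ)
          = -∑ n ∈ Finset.Ico (d+1) (max y d + 1), wlT F n * (y.choose n : ℤ) := by
        rw [hgy, hFy, hcomm, ← hsplit]
        ring
      rw [hdiff]
      refine dvd_neg.mpr (Finset.dvd_sum fun n hn => ?_)
      have hn' := Finset.mem_Ico.mp hn
      refine Dvd.dvd.mul_right ?_ _
      exact wl_tail_val hp s t m F hFrec hm n (by omega)
    have hall : ∀ (c : ℕ) (y : ℤ), 0 ≤ y + (c:ℤ) * Q → (p:ℤ)^m ∣ gZ y - F y := by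
      intro c
      induction c with
      | zero =>
        intro y hy
        simp only [Nat.cast_zero, zero_mul, add_zero] at hy
        lift y to ℕ using hy with n
        exact hnat n
      | succ c IH =>
        intro y hy
        have h1 : 0 ≤ (y + Q) + (c:ℤ) * Q := by push_cast at hy ⊢; linarith
        have h2 := IH (y + Q) h1
        have h3 := hg_per y
        have h4 := hF_per y
        have h5 : gZ y - F y = (gZ (y+Q) - F (y+Q)) - (gZ (y+Q) - gZ y) + (F (y+Q) - F y) := by
          ring
        rw [h5]
        exact dvd_add (dvd_sub h2 h3) h4
    have hdvd : (p:ℤ)^m ∣ gZ x - F x := by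
      refine hall x.natAbs x ?_
      have h1 : (x.natAbs : ℤ) * 1 ≤ (x.natAbs : ℤ) * Q :=
        mul_le_mul_of_nonneg_left hQ1 (by positivity)
      omega
    obtain ⟨z, hz⟩ := hdvd
    refine ⟨z, ?_⟩
    have hgcast : (∑ n ∈ Finset.range (d + 1), ((wlT F n : ℤ) : ℚ) * binomQ ((x : ℤ) : ℚ) n)
        = ((gZ x : ℤ) : ℚ) := by
      rw [hgZ]
      push_cast [wl_binomQ_eq]
      ring
    have hwcast : w.eval ((x.fdiv ((p:ℤ)^s) : ℤ) : ℚ) * (f x : ℚ) = ((F x : ℤ) : ℚ) := by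
      rw [hWspec, hFdef]
      push_cast
      ring
    rw [hgcast, hwcast, ← Int.cast_sub, hz]
    push_cast
    ring
  · -- divisibility
    intro n hn
    set z : ℤ := ⌈(((n : ℚ) - ((t : ℚ) + 1) * (p : ℚ) ^ s + 1) / ((Nat.totient (p ^ s) : ℚ)))⌉ with hzdef
    rcases Nat.eq_zero_or_pos ((max 0 z).toNat) with h0 | hpos
    · rw [h0, pow_zero]
      exact one_dvd _
    · have hzval : (((max 0 z).toNat : ℤ)) = z := by
        rcases le_or_gt z 0 with h | h
        · exfalso
          rw [max_eq_left h] at hpos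
          simp at hpos
        · rw [max_eq_right h.le, Int.toNat_of_nonneg h.le]
      set E : ℕ := (max 0 z).toNat with hE
      have hE1 : 1 ≤ E := hpos
      have hlt : ((E:ℤ) - 1) < z := by omega
      have hq : (((E:ℤ) - 1 : ℤ) : ℚ) < ((n : ℚ) - ((t : ℚ) + 1) * (p : ℚ) ^ s + 1)
          / ((Nat.totient (p ^ s) : ℚ)) := by
        rw [hzdef] at hlt
        exact Int.lt_ceil.mp hlt
      have hφQ : (0:ℚ) < ((Nat.totient (p ^ s) : ℚ)) := by exact_mod_cast hφ
      have hlin : (((E:ℤ) - 1 : ℤ) : ℚ) * ((Nat.totient (p ^ s) : ℚ))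
          < (n : ℚ) - ((t : ℚ) + 1) * (p : ℚ) ^ s + 1 := (lt_div_iff₀ hφQ).mp hq
      have hnineq : (t+1) * p^s - 1 + (E-1) * (p^s).totient < n := by
        have hc : ((t+1) * p^s + (E-1) * (p^s).totient : ℚ) < (n:ℚ) + 1 := by
          push_cast at hlin
          push_cast [Nat.cast_sub hE1]
          linarith
        have hc2 : (t+1) * p^s + (E-1) * (p^s).totient < n + 1 := by exact_mod_cast hc
        have h1 : 0 < (t+1)*p^s := Nat.mul_pos (Nat.succ_pos t) hN
        omega
      have := wl_main_val hp s t F hFrec n (E-1) hnineq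
      rwa [show E - 1 + 1 = E by omega] at this
end

section
/- For n, r ≥ 0 and s ≥ 0 integers and p prime, ∑_{i ≡ r mod p^s} (−1)^i C(n,i) ≡ 0 mod p^m, where m = max{0, ⌈(n − p^s + 1)/φ(p^s)⌉}. (Weisman's congruence, the unweighted special case.) -/
open Polynomial Finset

lemma lem1 (p : ℕ) (hp : p.Prime) (t : ℕ) :
    ∃ B : ℤ[X], (1 - X)^(p^t) = (1 - X^(p^t)) + (p:ℤ[X]) * ((1 - X) * B) := by
  haveI := Fact.mk hp
  have hmap : Polynomial.map (Int.castRingHom (ZMod p)) ((1 - X)^(p^t) - (1 - X^(p^t))) = 0 := by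
    simp only [Polynomial.map_sub, Polynomial.map_pow, Polynomial.map_one, Polynomial.map_X]
    rw [sub_pow_char_pow]
    simp
  have hdvd : C (p:ℤ) ∣ ((1 - X)^(p^t) - (1 - X^(p^t))) := by
    rw [C_dvd_iff_dvd_coeff]
    intro i
    have h2 := congrArg (fun f => Polynomial.coeff f i) hmap
    simp only [Polynomial.coeff_map, Polynomial.coeff_zero, eq_intCast] at h2
    exact (ZMod.intCast_zmod_eq_zero_iff_dvd _ p).mp h2
  obtain ⟨E, hE⟩ := hdvd
  have hE1 : E.IsRoot 1 := by
    have h0 : ((1 - X : ℤ[X])^(p^t) - (1 - X^(p^t))).eval 1 = 0 := by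
      simp
      intro h; exact absurd h hp.ne_zero
    rw [hE] at h0
    simp only [eval_mul, eval_C] at h0
    rcases mul_eq_zero.mp h0 with h | h
    · exact absurd (by exact_mod_cast h) hp.ne_zero
    · exact h
  obtain ⟨B, hB⟩ := (dvd_iff_isRoot.mpr hE1 : (X - C 1) ∣ E)
  refine ⟨-B, ?_⟩
  have key : (1 - X : ℤ[X])^(p^t) - (1 - X^(p^t)) = C (p:ℤ) * ((X - C 1) * B) := by rw [hE, hB]
  rw [C_1] at key
  rw [← C_eq_natCast]
  linear_combination key

lemma lem2 (p : ℕ) (hp : p.Prime) (t : ℕ) :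
    ∃ c : ℤ[X], (1 - X^(p^t))^p = (1 - X^(p^(t+1))) + (p:ℤ[X]) * ((1 - X^(p^t)) * c) := by
  obtain ⟨u, hu⟩ := lem1 p hp 1
  refine ⟨u.comp (X^(p^t)), ?_⟩
  have h2 := congrArg (fun f => f.comp ((X:ℤ[X])^(p^t))) hu
  simp only [pow_one, sub_comp, add_comp, mul_comp, pow_comp, one_comp, X_comp,
    natCast_comp] at h2
  rw [← pow_mul, ← pow_succ] at h2
  exact h2

lemma fleck (p q : ℕ) (hp1 : 1 ≤ p) (z c : ℤ[X])
    (hz : z^p = (1 - X^q) + (p:ℤ[X]) * (z * c)) :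
    ∀ k b, (X^q - 1 : ℤ[X]) ∣ z^(b+1+k*(p-1)) - (p:ℤ[X])^k * z^(b+1) * c^k := by
  intro k
  induction k with
  | zero => intro b; simp
  | succ k ih =>
    intro b
    have h1 := ih (b + (p-1))
    have key : z^(b+p) = z^b * (1 - X^q) + (p:ℤ[X]) * (z^(b+1) * c) := by
      rw [pow_add, hz]; ring
    have heq : z ^ (b+1+(k+1)*(p-1)) - (p:ℤ[X])^(k+1) * z^(b+1) * c^(k+1)
        = (z ^ (b+(p-1)+1+k*(p-1)) - (p:ℤ[X])^k * z^(b+(p-1)+1) * c^k)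
          + (-((p:ℤ[X])^k * c^k * z^b)) * (X^q - 1) := by
      rw [show b+1+(k+1)*(p-1) = b+(p-1)+1+k*(p-1) from by ring,
        show b+(p-1)+1 = b+p from by omega, key]
      ring
    rw [heq]
    exact dvd_add h1 (Dvd.intro_left _ rfl)

lemma main (p : ℕ) (hp : p.Prime) (t k n : ℕ) (hn : p^t + k*((p-1)*p^t) ≤ n) :
    (1 - X : ℤ[X])^n ∈ Ideal.span {((p:ℤ[X]))^k, X^(p^(t+1)) - 1} := by
  set h : ℕ := p^t with hh
  set q : ℕ := p^(t+1) with hq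
  obtain ⟨c, hc⟩ := lem2 p hp t
  obtain ⟨B, hB⟩ := lem1 p hp t
  set n' : ℕ := n / h with hn'
  have hhpos : 0 < h := pow_pos hp.pos t
  have hmod : h * n' + n % h = n := Nat.div_add_mod n h
  have hr0 : n % h < h := Nat.mod_lt _ hhpos
  have hn'ge : 1 + k*(p-1) ≤ n' := by
    rw [hn', Nat.le_div_iff_mul_le hhpos]
    have e1 : (1 + k*(p-1)) * h = h + k*((p-1)*h) := by ring
    omega
  have expand : (1 - X : ℤ[X])^n
      = ∑ i ∈ range (n'+1), ((1 - X^h)^i * ((p:ℤ[X]) * ((1 - X) * B))^(n'-i)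
          * (n'.choose i : ℤ[X])) * (1 - X)^(n % h) := by
    conv_lhs => rw [← hmod]
    rw [pow_add, pow_mul, hB, add_pow, sum_mul]
  rw [expand]
  refine Ideal.sum_mem _ fun i hi => ?_
  simp only [mem_range] at hi
  by_cases hik : k ≤ n' - i
  · refine Ideal.mem_span_pair.mpr
      ⟨(1 - X^h)^i * ((p:ℤ[X])^(n'-i-k) * ((1 - X) * B)^(n'-i))
        * (n'.choose i : ℤ[X]) * (1 - X)^(n % h), 0, ?_⟩
    conv_rhs => rw [mul_pow, show ((p:ℤ[X]))^(n'-i) = (p:ℤ[X])^k * (p:ℤ[X])^(n'-i-k) from by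
      rw [← pow_add]; congr 1; omega]
    ring
  · -- j := n' - i < k, use fleck on (1-X^h)^i
    push_neg at hik
    set j : ℕ := n' - i with hj
    have hij : i + j = n' := by omega
    have hile : 1 + (k-j)*(p-1) ≤ i := by
      have h1 : (k - j) * (p-1) + j * (p-1) = k * (p-1) := by
        rw [← Nat.add_mul]; congr 1; omega
      have h2 : j ≤ j * (p-1) := Nat.le_mul_of_pos_right _ (by
        have := hp.two_le; omega)
      omega
    have hfl := fleck p q hp.one_lt.le (1 - X^h) c hc (k-j) (i - 1 - (k-j)*(p-1))
    rw [show i - 1 - (k-j)*(p-1) + 1 + (k-j)*(p-1) = i from by omega] at hfl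
    obtain ⟨V, hV⟩ := hfl
    refine Ideal.mem_span_pair.mpr
      ⟨(1 - X^h)^(i - 1 - (k-j)*(p-1) + 1) * c^(k-j) * ((1 - X) * B)^j
        * (n'.choose i : ℤ[X]) * (1 - X)^(n % h),
       V * ((p:ℤ[X])^j * ((1 - X) * B)^j * (n'.choose i : ℤ[X]) * (1 - X)^(n % h)), ?_⟩
    rw [show ((p:ℤ[X]))^k = (p:ℤ[X])^(k-j) * (p:ℤ[X])^j from by
      rw [← pow_add]; congr 1; omega]
    conv_rhs => rw [mul_pow]
    linear_combination (-(((p:ℤ[X])^j * ((1 - X) * B)^j) * (n'.choose i : ℤ[X])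
      * (1 - X)^(n % h))) * hV

noncomputable def Lmap (q r : ℕ) : ℤ[X] →ₗ[ℤ] ℤ :=
  Polynomial.lsum (fun i => if i % q = r % q then LinearMap.id else 0)

lemma Lmap_monomial (q r i : ℕ) (a : ℤ) :
    Lmap q r (monomial i a) = if i % q = r % q then a else 0 := by
  unfold Lmap
  rw [lsum_apply, Polynomial.sum_monomial_index]
  · split_ifs <;> simp
  · split_ifs <;> simp

lemma Lmap_mul (q r : ℕ) (H : ℤ[X]) : Lmap q r ((X^q - 1) * H) = 0 := by
  rw [show ((X^q - 1 : ℤ[X]) * H) = ∑ i ∈ H.support, ((X:ℤ[X])^q - 1) * monomial i (H.coeff i)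
    from by rw [← Finset.mul_sum, ← as_sum_support]]
  rw [map_sum]
  refine Finset.sum_eq_zero fun i _ => ?_
  rw [sub_mul, one_mul, X_pow_eq_monomial, monomial_mul_monomial, one_mul, map_sub,
    Lmap_monomial, Lmap_monomial, Nat.add_mod_left, sub_self]

lemma Lmap_pow (q r n : ℕ) :
    Lmap q r ((1 - X : ℤ[X])^n)
      = ∑ i ∈ range (n+1), if i % q = r % q then ((-1:ℤ)^i * n.choose i) else 0 := by
  have hexp : (1 - X : ℤ[X])^n = ∑ i ∈ range (n+1), monomial i ((-1:ℤ)^i * (n.choose i : ℤ)) := by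
    rw [sub_eq_neg_add, add_pow]
    refine Finset.sum_congr rfl fun i hi => ?_
    rw [one_pow, mul_one, ← C_mul_X_pow_eq_monomial, map_mul, map_pow, map_neg, map_one,
      C_eq_natCast]
    ring
  rw [hexp, map_sum]
  exact Finset.sum_congr rfl fun i _ => Lmap_monomial q r i _

theorem stmt10 (p : ℕ) (hp : p.Prime) (n r s : ℕ) :
    (p : ℤ) ^ ((max 0
        ⌈(((n : ℚ) - (p : ℚ) ^ s + 1) / (Nat.totient (p ^ s) : ℚ))⌉).toNat) ∣
      ∑ i ∈ (Finset.range (n + 1)).filter (fun i => i % p ^ s = r % p ^ s),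
        (-1 : ℤ) ^ i * (n.choose i : ℤ) := by
  rcases Nat.eq_zero_or_pos s with rfl | hs
  · -- s = 0
    simp only [pow_zero, Nat.totient_one, Nat.cast_one, Nat.mod_one, Finset.filter_true_of_mem
      (fun _ _ => rfl), Finset.filter_true]
    have hceil : ((n : ℚ) - 1 + 1) / 1 = (n:ℚ) := by ring
    rw [hceil, Int.ceil_natCast]
    rcases Nat.eq_zero_or_pos n with rfl | hn
    · norm_num
    · rw [Int.alternating_sum_range_choose_of_ne (by omega)]
      exact dvd_zero _
  · -- s ≥ 1
    set m : ℕ := (max 0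
        ⌈(((n : ℚ) - (p : ℚ) ^ s + 1) / (Nat.totient (p ^ s) : ℚ))⌉).toNat with hmdef
    rcases Nat.eq_zero_or_pos m with hm0 | hmpos
    · rw [hm0, pow_zero]; exact one_dvd _
    -- m ≥ 1
    set ν : ℤ := ⌈(((n : ℚ) - (p : ℚ) ^ s + 1) / (Nat.totient (p ^ s) : ℚ))⌉ with hν
    have hν1 : 1 ≤ ν := by
      by_contra hc
      push_neg at hc
      have h0 : max 0 ν = 0 := max_eq_left (by omega)
      have : m = 0 := by rw [hmdef, h0]; rfl
      omega
    have hmν : (m:ℤ) = ν := by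
      rw [hmdef, max_eq_right (by omega), Int.toNat_of_nonneg (by omega)]
    set t : ℕ := s - 1 with ht
    have hst : s = t + 1 := by omega
    have hφpos : 0 < Nat.totient (p^s) := Nat.totient_pos.mpr (pow_pos hp.pos s)
    have hφQ : (0:ℚ) < (Nat.totient (p^s) : ℚ) := by exact_mod_cast hφpos
    have hx : (ν:ℚ) < ((n : ℚ) - (p : ℚ) ^ s + 1) / (Nat.totient (p ^ s) : ℚ) + 1 :=
      Int.ceil_lt_add_one _
    have h4 : ((ν:ℚ) - 1) * (Nat.totient (p^s) : ℚ) < (n : ℚ) - (p : ℚ) ^ s + 1 := by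
      rw [← lt_div_iff₀ hφQ]; linarith
    have hQ : (ν:ℚ) * (Nat.totient (p^s) : ℚ) + (p:ℚ)^s
        < (n:ℚ) + 1 + (Nat.totient (p^s) : ℚ) := by nlinarith
    have hZ : (ν) * (Nat.totient (p^s) : ℤ) + ((p:ℤ))^s
        < (n:ℤ) + 1 + (Nat.totient (p^s) : ℤ) := by exact_mod_cast hQ
    rw [← hmν] at hZ
    have hZ2 : (m:ℤ) * (Nat.totient (p^s) : ℤ) + ((p:ℤ))^s
        ≤ (n:ℤ) + (Nat.totient (p^s) : ℤ) :=
      Int.lt_add_one_iff.mp (by linarith)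
    have hN : m * Nat.totient (p^s) + p^s ≤ n + Nat.totient (p^s) := by exact_mod_cast hZ2
    -- convert totient
    have hφeq : Nat.totient (p^s) = (p-1) * p^t := by
      rw [Nat.totient_prime_pow hp hs, ht, mul_comm]
    have hps : p^s = (p-1) * p^t + p^t := by
      rw [hst, pow_succ, mul_comm (p^t) p]
      have h2 : (p-1) * p^t + p^t = ((p-1)+1) * p^t := by ring
      rw [h2, Nat.sub_add_cancel hp.one_lt.le]
    rw [hφeq, hps] at hN
    have hgoal : p^t + m*((p-1)*p^t) ≤ n := by
      generalize hA : m * ((p-1) * p^t) = A at hN ⊢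
      generalize hC : (p-1) * p^t = C0 at hN ⊢
      omega
    -- apply main lemma
    have hmem := main p hp t m n hgoal
    rw [← hst] at hmem
    obtain ⟨u, v, huv⟩ := Ideal.mem_span_pair.mp hmem
    have hL := congrArg (Lmap (p^s) r) huv
    rw [map_add] at hL
    have h1 : Lmap (p^s) r (u * (p:ℤ[X])^m) = (p:ℤ)^m * Lmap (p^s) r u := by
      rw [show (u * (p:ℤ[X])^m) = ((p:ℤ)^m) • u from by
        rw [smul_eq_C_mul, map_pow, C_eq_natCast]; ring]
      rw [map_smul, smul_eq_mul]
    have h2 : Lmap (p^s) r (v * (X^(p^s) - 1)) = 0 := by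
      rw [mul_comm]; exact Lmap_mul _ _ _
    rw [h1, h2, add_zero] at hL
    have h3 := Lmap_pow (p^s) r n
    rw [← hL] at h3
    rw [Finset.sum_filter, ← h3]
    exact Dvd.intro _ rfl
end

section
/- Let G be a finite abelian p-group. Then the Davenport constant D(G) equals D*(G) := 1 + ∑_{i=1}^r (q_i − 1), where G ≅ C_{q_1} ⊕ ⋯ ⊕ C_{q_r} with each q_i a power of p. (Olson's theorem.) -/
/-!
Olson's argument in the group algebra `𝔽_p[G]`. If `G` is generated by elements `b i` of order
dividing `p ^ e i`, then `(X^{b i} - 1)^{p ^ e i} = X^{p ^ e i • b i} - 1 = 0` by Frobenius, and the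
augmentation ideal `J` is generated by the `X^{b i} - 1`; by pigeonhole, `J ^ n = 0` as soon as
`n > ∑ (p ^ e i - 1)`. For a zero-sum-free sequence `g₁, …, gₙ`, however, the product
`∏ (X^{gⱼ} - 1) ∈ J ^ n` has constant coefficient `(-1)^n ≠ 0`, since the only subsum equal to `0`
is the empty one. Conversely, `p ^ e i - 1` copies of each standard generator of `∏ ℤ/p^{e i}` form
a zero-sum-free sequence of length `∑ (p ^ e i - 1)`.
-/

open Finset

lemma Fintype.exists_le_card_fiber_of_sum_lt_card {ι κ : Type*} [Fintype ι] [Fintype κ]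
    [DecidableEq ι] (f : κ → ι) (q : ι → ℕ) (hcard : ∑ i, (q i - 1) < Fintype.card κ) :
    ∃ i, q i ≤ #{j | f j = i} := by
  by_contra! h
  have hfib : Fintype.card κ = ∑ i, #{j | f j = i} :=
    card_eq_sum_card_fiberwise fun j _ => mem_univ (f j)
  have : ∑ i, #{j | f j = i} ≤ ∑ i, (q i - 1) := sum_le_sum fun i _ => Nat.le_sub_one_of_lt (h i)
  omega

lemma Fintype.prod_comp_eq_zero_of_sum_lt_card {M ι κ : Type*} [CommMonoidWithZero M] [Fintype ι]
    [Fintype κ] {y : ι → M} {q : ι → ℕ} (hy : ∀ i, y i ^ q i = 0) (f : κ → ι)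
    (hcard : ∑ i, (q i - 1) < Fintype.card κ) : ∏ j, y (f j) = 0 := by
  classical
  obtain ⟨i, hi⟩ := Fintype.exists_le_card_fiber_of_sum_lt_card f q hcard
  rw [← Finset.prod_fiberwise univ f (fun j => y (f j))]
  refine prod_eq_zero (mem_univ i) ?_
  rw [Finset.prod_congr rfl fun j hj => by rw [(mem_filter.mp hj).2], Finset.prod_const]
  exact pow_eq_zero_of_le hi (hy i)

lemma Ideal.span_range_pow_eq_bot {R ι : Type*} [CommRing R] [Fintype ι] {y : ι → R}
    {q : ι → ℕ} (hy : ∀ i, y i ^ q i = 0) {n : ℕ} (hn : ∑ i, (q i - 1) < n) :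
    Ideal.span (Set.range y) ^ n = ⊥ := by
  rw [Ideal.span, Submodule.span_pow, Submodule.span_eq_bot]
  rintro _ hz
  obtain ⟨z, hzy, rfl⟩ := Set.mem_pow_iff_prod.mp hz
  choose f hf using fun j => Set.mem_range.mp (hzy j)
  simp only [← hf]
  exact Fintype.prod_comp_eq_zero_of_sum_lt_card hy f (by simpa using hn)

namespace AddMonoidAlgebra

section CommMonoid

variable {k G : Type*} [CommRing k] [AddCommMonoid G]

lemma single_sub_one_pow_eq_zero (p e : ℕ) [Fact p.Prime] [CharP k p] {g : G}
    (hg : p ^ e • g = 0) : (single g (1 : k) - 1) ^ p ^ e = 0 := by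
  have := charP_of_injective_algebraMap' k (A := AddMonoidAlgebra k G) p
  rw [sub_pow_char_pow, single_pow, hg, one_pow, ← one_def, one_pow, sub_self]

lemma prod_single_sub_one_ne_zero [Nontrivial k] {ι : Type*} (s : Finset ι) (x : ι → G)
    (hx : ∀ t ⊆ s, t.Nonempty → ∑ i ∈ t, x i ≠ 0) :
    ∏ i ∈ s, (single (x i) (1 : k) - 1) ≠ 0 := by
  classical
  intro h
  have hexpand : ∏ i ∈ s, (single (x i) (1 : k) - 1) =
      ∑ t ∈ s.powerset, single (∑ i ∈ t, x i) ((-1) ^ #(s \ t)) := by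
    simp_rw [sub_eq_add_neg, prod_add]
    refine sum_congr rfl fun t _ => ?_
    rw [prod_single, prod_const_one, prod_const, one_def, ← single_neg, single_pow,
      single_mul_single, smul_zero, add_zero, one_mul]
  have hcoeff := congrArg (fun f : AddMonoidAlgebra k G => f.coeff 0) h
  simp only [hexpand, coeff_sum, coeff_single, Finsupp.finsetSum_apply,
    Finsupp.single_apply] at hcoeff
  rw [sum_eq_single_of_mem ∅ (empty_mem_powerset s) fun t ht hne =>
    if_neg (hx t (mem_powerset.mp ht) (nonempty_iff_ne_empty.mpr hne))] at hcoeff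
  simp only [sdiff_empty, sum_empty, if_pos, coeff_zero, Finsupp.coe_zero, Pi.zero_apply] at hcoeff
  exact ((isUnit_neg_one (α := k)).pow _).ne_zero hcoeff

end CommMonoid

variable {k G : Type*} [CommRing k] [AddCommGroup G]

lemma single_sub_one_mem_span_of_mem_closure {ι : Type*} {b : ι → G} {g : G}
    (hg : g ∈ AddSubgroup.closure (Set.range b)) :
    single g (1 : k) - 1 ∈ Ideal.span (Set.range fun i => single (b i) (1 : k) - 1) := by
  induction hg using AddSubgroup.closure_induction with
  | mem _ hx =>
    obtain ⟨i, rfl⟩ := hx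
    exact Ideal.subset_span ⟨i, rfl⟩
  | zero => simp [← one_def]
  | add g h _ _ hg hh =>
    have hsplit :
        single (g + h) (1 : k) - 1 = single g 1 * (single h 1 - 1) + (single g 1 - 1) := by
      rw [mul_sub, single_mul_single, one_mul, mul_one]
      ring
    rw [hsplit]
    exact add_mem (Ideal.mul_mem_left _ _ hh) hg
  | neg g _ hg =>
    have hsplit : single (-g) (1 : k) - 1 = -(single (-g) 1 * (single g 1 - 1)) := by
      rw [mul_sub, single_mul_single, one_mul, mul_one, neg_add_cancel, ← one_def]
      ring
    rw [hsplit]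
    exact neg_mem (Ideal.mul_mem_left _ _ hg)

end AddMonoidAlgebra

def ZeroSumFree {G : Type*} [AddCommMonoid G] (S : Multiset G) : Prop :=
  ∀ T ≤ S, T ≠ 0 → T.sum ≠ 0

section ZeroSumFree

variable {G H : Type*} [AddCommMonoid G] [AddCommMonoid H]

lemma not_zeroSumFree_iff {S : Multiset G} : ¬ ZeroSumFree S ↔ ∃ T ≤ S, T ≠ 0 ∧ T.sum = 0 := by
  simp [ZeroSumFree]

lemma ZeroSumFree.mono {S T : Multiset G} (hS : ZeroSumFree S) (hTS : T ≤ S) : ZeroSumFree T :=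
  fun U hUT => hS U (hUT.trans hTS)

lemma ZeroSumFree.map_addEquiv {S : Multiset G} (hS : ZeroSumFree S) (φ : G ≃+ H) :
    ZeroSumFree (S.map φ) := by
  intro T hT hT0 hsum
  refine hS (T.map φ.symm) ?_ (by simpa using hT0) (by rw [← map_multiset_sum, hsum, map_zero])
  simpa [Multiset.map_map] using Multiset.map_le_map (f := φ.symm) hT

lemma ZeroSumFree.sum_ne_zero [DecidableEq G] {S : Multiset G} (hS : ZeroSumFree S)
    {t : Finset S} (ht : t.Nonempty) : ∑ j ∈ t, (j : G) ≠ 0 := by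
  refine hS (t.val.map fun x : S => (x : G)) ?_ ?_
  · exact (Multiset.map_le_map (Finset.val_le_iff.mpr t.subset_univ)).trans_eq S.map_univ_coe
  · rw [Ne, Multiset.map_eq_zero, Finset.val_eq_zero]
    exact ht.ne_empty

lemma isLeast_one_add_of_zeroSumFree {n : ℕ}
    (hfree : ∃ S : Multiset G, S.card = n ∧ ZeroSumFree S)
    (hbound : ∀ S : Multiset G, ZeroSumFree S → S.card ≤ n) :
    IsLeast {ℓ : ℕ | ∀ S : Multiset G, S.card = ℓ → ∃ T, T ≤ S ∧ T ≠ 0 ∧ T.sum = 0} (1 + n) := by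
  refine ⟨fun S hS => not_zeroSumFree_iff.mp fun hfree => ?_, fun ℓ hℓ => ?_⟩
  · have := hbound S hfree
    omega
  · by_contra! hlt
    obtain ⟨S, hcard, hS⟩ := hfree
    obtain ⟨T, hT⟩ : ∃ T, T ∈ Multiset.powersetCard ℓ S :=
      Multiset.card_pos_iff_exists_mem.mp <| by
        rw [Multiset.card_powersetCard]; exact Nat.choose_pos (by omega)
    rw [Multiset.mem_powersetCard] at hT
    exact not_zeroSumFree_iff.mpr (hℓ T hT.2) (hS.mono hT.1)

end ZeroSumFree

lemma Multiset.exists_le_map_eq_of_le_map {α β : Type*} {f : α → β} {S : Multiset α}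
    {T : Multiset β} (h : T ≤ S.map f) : ∃ U ≤ S, U.map f = T := by
  induction S using Quotient.inductionOn
  induction T using Quotient.inductionOn
  obtain ⟨l, hperm, hsub⟩ := Multiset.coe_le.mp h
  obtain ⟨l', hl', rfl⟩ := List.sublist_map_iff.mp hsub
  exact ⟨l', Multiset.coe_le.mpr hl'.subperm, Quotient.sound hperm⟩

section Pi

variable {ι : Type*} [DecidableEq ι]

lemma Multiset.sum_map_single_one_apply {M : ι → Type*} [∀ i, AddCommMonoidWithOne (M i)]
    (I : Multiset ι) (j : ι) : (I.map fun i => (Pi.single i 1 : ∀ i, M i)).sum j = I.count j := by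
  induction I using Multiset.induction_on with
  | empty => simp
  | cons i I ih =>
    rw [Multiset.map_cons, Multiset.sum_cons, Pi.add_apply, ih, Multiset.count_cons]
    by_cases hji : j = i
    · subst hji
      simp [add_comm]
    · simp [hji]

lemma zeroSumFree_map_single_one {q : ι → ℕ} {I : Multiset ι} (hI : ∀ i, I.count i < q i) :
    ZeroSumFree (I.map fun i => (Pi.single i 1 : ∀ i, ZMod (q i))) := by
  intro T hT hT0 hsum
  obtain ⟨U, hUI, rfl⟩ := Multiset.exists_le_map_eq_of_le_map hT
  refine hT0 (Multiset.map_eq_zero.mpr (Multiset.eq_zero_of_forall_notMem fun j hj => ?_))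
  have hdvd : q j ∣ U.count j := by
    rw [← ZMod.natCast_eq_zero_iff,
      ← Multiset.sum_map_single_one_apply (M := fun i => ZMod (q i)), hsum, Pi.zero_apply]
  have := Nat.eq_zero_of_dvd_of_lt hdvd ((Multiset.count_le_of_le j hUI).trans_lt (hI j))
  exact (Multiset.count_pos.mpr hj).ne' this

lemma AddSubgroup.closure_range_single_one [Fintype ι] (q : ι → ℕ) :
    AddSubgroup.closure (Set.range fun i => (Pi.single i 1 : ∀ i, ZMod (q i))) = ⊤ := by
  refine eq_top_iff.mpr fun g _ => ?_
  rw [← Finset.univ_sum_single g]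
  refine AddSubgroup.sum_mem _ fun i _ => ?_
  rw [← ZMod.intCast_zmod_cast (g i), ← zsmul_one, Pi.single_smul]
  exact zsmul_mem (AddSubgroup.subset_closure (Set.mem_range_self i)) _

end Pi

open AddMonoidAlgebra in
theorem ZeroSumFree.card_le_sum_pow_sub_one {p : ℕ} [Fact p.Prime] {G ι : Type*} [AddCommGroup G]
    [Fintype ι] {b : ι → G} (hb : AddSubgroup.closure (Set.range b) = ⊤) {e : ι → ℕ}
    (hbe : ∀ i, p ^ e i • b i = 0) {S : Multiset G} (hS : ZeroSumFree S) :
    S.card ≤ ∑ i, (p ^ e i - 1) := by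
  classical
  by_contra! hlt
  let J : Ideal (AddMonoidAlgebra (ZMod p) G) :=
    Ideal.span (Set.range fun i => single (b i) (1 : ZMod p) - 1)
  have hJ : J ^ S.card = ⊥ :=
    Ideal.span_range_pow_eq_bot (fun i => single_sub_one_pow_eq_zero p (e i) (hbe i)) hlt
  have hprod : ∏ j : S, (single (j : G) (1 : ZMod p) - 1) ∈ J ^ S.card := by
    rw [← Multiset.card_coe, ← Finset.card_univ, ← Finset.prod_const]
    exact Ideal.prod_mem_prod fun j _ =>
      single_sub_one_mem_span_of_mem_closure (hb ▸ AddSubgroup.mem_top _)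
  rw [hJ, Ideal.mem_bot] at hprod
  exact prod_single_sub_one_ne_zero _ _ (fun t _ ht => hS.sum_ne_zero ht) hprod

theorem stmt11_general (p : ℕ) (hp : p.Prime) (G : Type*) [AddCommGroup G]
    (r : ℕ) (q e : Fin r → ℕ) (hq : ∀ i, q i = p ^ e i)
    (iso : G ≃+ ∀ i, ZMod (q i)) :
    IsLeast {ℓ : ℕ | ∀ S : Multiset G, S.card = ℓ →
        ∃ T, T ≤ S ∧ T ≠ 0 ∧ T.sum = 0}
      (1 + ∑ i, (q i - 1)) := by
  have := Fact.mk hp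
  refine isLeast_one_add_of_zeroSumFree ?_ fun S hS => ?_
  · let I : Multiset (Fin r) := ∑ i, Multiset.replicate (q i - 1) i
    have hI : ∀ i, I.count i < q i := fun i => by
      simp [I, Multiset.count_sum', Multiset.count_replicate, hq, hp.pos]
    refine ⟨(I.map fun i => (Pi.single i 1 : ∀ i, ZMod (q i))).map iso.symm, ?_,
      (zeroSumFree_map_single_one hI).map_addEquiv iso.symm⟩
    simp [I, Multiset.card_sum]
  · have hbe : ∀ i, p ^ e i • (Pi.single i 1 : ∀ i, ZMod (q i)) = 0 := fun i => by
      rw [← hq, ← Pi.single_smul, nsmul_one, ZMod.natCast_self, Pi.single_zero]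
    simpa [hq] using (hS.map_addEquiv iso).card_le_sum_pow_sub_one
      (AddSubgroup.closure_range_single_one q) hbe

theorem stmt11 (p : ℕ) (hp : p.Prime) (G : Type*) [AddCommGroup G] [Fintype G]
    (r : ℕ) (q e : Fin r → ℕ) (hq : ∀ i, q i = p ^ e i)
    (iso : G ≃+ ∀ i, ZMod (q i)) :
    IsLeast {ℓ : ℕ | ∀ S : Multiset G, S.card = ℓ →
        ∃ T, T ≤ S ∧ T ≠ 0 ∧ T.sum = 0}
      (1 + ∑ i, (q i - 1)) :=
  stmt11_general p hp G r q e hq iso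
end

section
/- Let G be a finite abelian p-group with exponent q > 1, and let S be a sequence of ℓ terms from G with ℓ ≥ m·(p−1)q/p + D*(G), where m ≥ 0. Then ∑_{j ≥ 0} (p−1)^j N_j(S) ≡ 0 mod p^{m+1}, where N_j(S) denotes the number of (indexed) zero-sum subsequences of S of length j. -/
/-!
In `ℤ[G]` the constant coefficient of `∏ i, (1 + (p - 1) X^{g i})` is `∑ j, (p - 1)^j N_j(S)`.
Writing `1 + (p - 1) X^g = p - (p - 1) (1 - X^g)` and expanding, every term is `p^|T|` times a
product of `ℓ - |T|` elements of the augmentation ideal `I`, which is generated by the elements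
`1 - X^{E j}` for a basis `E` of `G`. Since `X^{E j}` has order `p^{e j}`, the congruence
`(1 - x)^{p^k} ∈ p (1 - x)^{p^{k-1}} + p² (1 - x)` for `x^{p^k} = 1` lets one trade a factor `p`
for a drop of at most `φ = (p - 1) q / p` in the degree of a monomial in these generators; by
pigeonhole, `I^n ⊆ p^s ℤ[G]` once `n + φ ≥ s φ + D*(G)`.
-/

open Finset

section PowerCongruences

variable {R : Type*} [CommRing R] {p : ℕ}

theorem sq_mul_dvd_pow_sub_pow_of_sub_eq_mul {a b c : R} (h : a - b = p * c) :
    (p : R) ^ 2 * c ∣ a ^ p - b ^ p := by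
  obtain ⟨d, hd⟩ := dvd_geom_sum₂_self (n := p) (h ▸ dvd_mul_right _ c)
  exact ⟨d, by rw [← geom_sum₂_mul, h, hd]; ring⟩

theorem Nat.Prime.mul_one_sub_dvd_one_sub_pow_sub (hp : p.Prime) (x : R) :
    (p * (1 - x) : R) ∣ (1 - x) ^ p - (1 - x ^ p) := by
  obtain ⟨r, hr⟩ := exists_add_pow_prime_eq hp (1 - x) x
  rw [sub_add_cancel, one_pow] at hr
  exact ⟨-(x * r), by linear_combination -hr⟩

theorem Nat.Prime.mul_one_sub_dvd_one_sub_pow_pow_sub (hp : p.Prime) (x : R) (t : ℕ) :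
    (p * (1 - x) : R) ∣ (1 - x) ^ p ^ t - (1 - x ^ p ^ t) := by
  induction t with
  | zero => simp
  | succ t ih =>
    have hstep : (p * (1 - x) : R) ∣ (1 - x ^ p ^ t) ^ p - (1 - x ^ p ^ (t + 1)) := by
      rw [pow_succ, pow_mul]
      refine dvd_trans (mul_dvd_mul_left _ ?_) (hp.mul_one_sub_dvd_one_sub_pow_sub _)
      simpa using sub_dvd_pow_sub_pow (1 : R) x (p ^ t)
    have hpow := ih.trans (sub_dvd_pow_sub_pow ((1 - x) ^ p ^ t) (1 - x ^ p ^ t) p)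
    rw [← pow_mul, ← pow_succ] at hpow
    simpa using dvd_add hpow hstep

theorem Nat.Prime.exists_one_sub_pow_pow_eq_of_pow_pow_eq_one (hp : p.Prime) {x : R} {e : ℕ}
    (hx : x ^ p ^ e = 1) :
    ∃ v w : R, (1 - x) ^ p ^ e = p * (1 - x) ^ p ^ (e - 1) * v + p ^ 2 * (1 - x) * w := by
  cases e with
  | zero => exact ⟨0, 0, by simp_all⟩
  | succ t =>
    obtain ⟨r, hr⟩ := hp.mul_one_sub_dvd_one_sub_pow_pow_sub x t
    obtain ⟨s, hs⟩ := sq_mul_dvd_pow_sub_pow_of_sub_eq_mul (p := p) (hr.trans (mul_assoc _ _ _))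
    obtain ⟨r', hr'⟩ := hp.mul_one_sub_dvd_one_sub_pow_sub (x ^ p ^ t)
    rw [← pow_mul, ← pow_succ, hx, sub_self, sub_zero] at hr'
    refine ⟨r', r * s - r * r', ?_⟩
    rw [Nat.add_sub_cancel, pow_succ, pow_mul]
    linear_combination hs + hr' - (p * r') * hr

end PowerCongruences

theorem Ideal.span_range_pow_le_span_multiset_prod {R ι : Type*} [CommRing R] (y : ι → R)
    (k : ℕ) :
    Ideal.span (Set.range y) ^ k ≤
      Ideal.span {z | ∃ M : Multiset ι, M.card = k ∧ (M.map y).prod = z} := by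
  induction k with
  | zero =>
    rw [pow_zero, Ideal.one_eq_top, top_le_iff, Ideal.eq_top_iff_one]
    exact Ideal.subset_span ⟨0, rfl, by simp⟩
  | succ k ih =>
    rw [pow_succ']
    refine (Ideal.mul_mono_right ih).trans ?_
    rw [Ideal.span_mul_span']
    refine Ideal.span_mono ?_
    rintro _ ⟨_, ⟨j, rfl⟩, _, ⟨M, rfl, rfl⟩, rfl⟩
    exact ⟨j ::ₘ M, by simp, by simp⟩

section Filtration

variable {R ι : Type*} [CommRing R] [Fintype ι] {p : ℕ} {y : ι → R} {e : ι → ℕ} {φ : ℕ}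

theorem pow_dvd_multiset_prod_map
    (hy : ∀ j, ∃ v w : R, y j ^ p ^ e j = p * y j ^ p ^ (e j - 1) * v + p ^ 2 * y j * w)
    (h₁ : ∀ j, p ^ e j ≤ φ + p ^ (e j - 1)) (h₂ : ∀ j, p ^ e j ≤ 2 * φ + 1) (s : ℕ)
    (M : Multiset ι) (hM : s * φ + (1 + ∑ j, (p ^ e j - 1)) ≤ M.card + φ) :
    (p : R) ^ s ∣ (M.map y).prod := by
  classical
  -- Pigeonhole: some `y j ^ p ^ e j` divides the monomial. Rewriting it by `hy` costs at most `φ`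
  -- in degree for the term divisible by `p`, and at most `2 * φ` for the one divisible by `p ^ 2`.
  induction s using Nat.strong_induction_on generalizing M with
  | _ s ih =>
  rcases s with _ | s
  · simp
  obtain ⟨j, hj⟩ : ∃ j, p ^ e j ≤ M.count j := by
    have hlt : ∑ j, (p ^ e j - 1) < ∑ j, M.count j := by
      rw [Multiset.sum_count_eq_card (fun _ _ => mem_univ _)]
      linarith [Nat.zero_le (s * φ)]
    obtain ⟨j, -, hj⟩ := exists_lt_of_sum_lt hlt
    exact ⟨j, by omega⟩
  obtain ⟨M', rfl⟩ := Multiset.le_iff_exists_add.1 (Multiset.le_count_iff_replicate_le.1 hj)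
  obtain ⟨v, w, hvw⟩ := hy j
  have hsplit : ((Multiset.replicate (p ^ e j) j + M').map y).prod =
      p * v * ((Multiset.replicate (p ^ (e j - 1)) j + M').map y).prod +
        p ^ 2 * w * ((j ::ₘ M').map y).prod := by
    simp only [Multiset.map_add, Multiset.prod_add, Multiset.map_replicate,
      Multiset.prod_replicate, Multiset.map_cons, Multiset.prod_cons, hvw]
    ring
  simp only [Multiset.card_add, Multiset.card_replicate] at hM
  rw [hsplit]
  refine dvd_add ?_ ?_
  · rw [pow_succ', mul_assoc]
    refine mul_dvd_mul_left _ (dvd_mul_of_dvd_right (ih s (Nat.lt_succ_self s) _ ?_) _)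
    simp only [Multiset.card_add, Multiset.card_replicate]
    linarith [h₁ j]
  · rcases s with _ | s
    · exact (dvd_mul_of_dvd_left (pow_dvd_pow _ (by omega)) _).mul_right _
    rw [show s + 1 + 1 = 2 + s by ring, pow_add, mul_assoc]
    refine mul_dvd_mul_left _ (dvd_mul_of_dvd_right (ih s (by omega) _ ?_) _)
    simp only [Multiset.card_cons]
    linarith [h₂ j]

theorem Ideal.span_range_pow_le_span_singleton_pow
    (hy : ∀ j, ∃ v w : R, y j ^ p ^ e j = p * y j ^ p ^ (e j - 1) * v + p ^ 2 * y j * w)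
    (h₁ : ∀ j, p ^ e j ≤ φ + p ^ (e j - 1)) (h₂ : ∀ j, p ^ e j ≤ 2 * φ + 1) {s k : ℕ}
    (hk : s * φ + (1 + ∑ j, (p ^ e j - 1)) ≤ k + φ) :
    Ideal.span (Set.range y) ^ k ≤ Ideal.span {(p : R) ^ s} := by
  refine (Ideal.span_range_pow_le_span_multiset_prod y k).trans (Ideal.span_le.2 ?_)
  rintro _ ⟨M, rfl, rfl⟩
  exact Ideal.mem_span_singleton.2 (pow_dvd_multiset_prod_map hy h₁ h₂ s M hk)

end Filtration

theorem pow_succ_dvd_prod_add_mul {R κ : Type*} [CommRing R] {π : R} (c : R) {I : Ideal R}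
    {φ D : ℕ} (hφ : 1 ≤ φ) (hI : ∀ s k, s * φ + D ≤ k + φ → I ^ k ≤ Ideal.span {π ^ s})
    {s : Finset κ} {y : κ → R} (hy : ∀ i ∈ s, y i ∈ I) {m : ℕ} (hm : m * φ + D ≤ #s) :
    π ^ (m + 1) ∣ ∏ i ∈ s, (π + c * y i) := by
  classical
  rw [prod_add]
  refine dvd_sum fun T hT => ?_
  rw [mem_powerset] at hT
  rw [prod_const, prod_mul_distrib, prod_const]
  rcases lt_or_ge m #T with hmT | hTm
  · exact dvd_mul_of_dvd_left (pow_dvd_pow π hmT) _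
  obtain ⟨u, rfl⟩ := Nat.exists_eq_add_of_le hTm
  have hprod : ∏ i ∈ s \ T, y i ∈ I ^ #(s \ T) := by
    rw [← prod_const]
    exact Ideal.prod_mem_prod fun i hi => hy i (mem_sdiff.1 hi).1
  have hcard : #(s \ T) + #T = #s := card_sdiff_add_card_eq_card hT
  have hspan := hI (u + 1) #(s \ T) (by nlinarith) hprod
  rw [Ideal.mem_span_singleton] at hspan
  rw [show #T + u + 1 = #T + (u + 1) by ring, pow_add]
  exact mul_dvd_mul_left _ (dvd_mul_of_dvd_right hspan _)

theorem Nat.pow_le_sub_one_mul_pow_pred_add_pow_pred {p e f : ℕ} (hp : 1 ≤ p) (hef : e ≤ f) :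
    p ^ e ≤ (p - 1) * p ^ (f - 1) + p ^ (e - 1) := by
  rcases e with _ | e
  · simp
  have hle : p ^ e ≤ p ^ (f - 1) := Nat.pow_le_pow_right hp (by omega)
  have hsplit : p ^ (e + 1) = (p - 1) * p ^ e + p ^ e := by
    rw [pow_succ, mul_comm]
    nth_rw 1 [← Nat.sub_add_cancel hp]
    ring
  rw [hsplit, Nat.add_sub_cancel]
  exact Nat.add_le_add_right (Nat.mul_le_mul_left _ hle) _

theorem Nat.pow_le_two_mul_sub_one_mul_pow_pred_add_one {p e f : ℕ} (hp : 2 ≤ p) (hef : e ≤ f) :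
    p ^ e ≤ 2 * ((p - 1) * p ^ (f - 1)) + 1 := by
  rcases f with _ | f
  · simp [Nat.le_zero.1 hef]
  calc p ^ e ≤ p ^ (f + 1) := Nat.pow_le_pow_right (by omega) hef
    _ = p * p ^ f := by rw [pow_succ, mul_comm]
    _ ≤ 2 * (p - 1) * p ^ f := Nat.mul_le_mul_right _ (by omega)
    _ ≤ 2 * ((p - 1) * p ^ (f + 1 - 1)) + 1 := by rw [Nat.add_sub_cancel, mul_assoc]; omega

theorem one_sub_mem_span_range_one_sub {R ι : Type*} [CommRing R] {x : ι → R} {z : R}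
    (hz : z ∈ Submonoid.closure (Set.range x)) :
    1 - z ∈ Ideal.span (Set.range fun j => 1 - x j) := by
  induction hz using Submonoid.closure_induction with
  | mem z hz =>
    obtain ⟨j, rfl⟩ := hz
    exact Ideal.subset_span ⟨j, rfl⟩
  | one => simp
  | mul a b _ _ ha hb =>
    rw [show 1 - a * b = (1 - a) + a * (1 - b) by ring]
    exact add_mem ha (Ideal.mul_mem_left _ _ hb)

namespace AddMonoidAlgebra

variable {k G : Type*}

theorem single_sum_nsmul_mem_closure [CommSemiring k] [AddCommMonoid G] {ι : Type*}
    [Fintype ι] (E : ι → G) (n : ι → ℕ) :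
    single (∑ j, n j • E j) (1 : k) ∈ Submonoid.closure (Set.range fun j => single (E j) 1) := by
  have hprod : single (∑ j, n j • E j) (1 : k) = ∏ j, single (E j) 1 ^ n j := by
    simp only [single_pow, one_pow, prod_single, prod_const_one]
  rw [hprod]
  exact Submonoid.prod_mem _ fun j _ => pow_mem (Submonoid.subset_closure (Set.mem_range_self j)) _

theorem natCast_sub_one_mul_single_one [Ring k] [AddZeroClass G] (n : ℕ) (g : G) :
    ((n : k[G]) - 1) * single g 1 = single g ((n : k) - 1) := by
  rw [natCast_def, one_def, ← single_sub, single_mul_single, zero_add, mul_one]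

theorem pow_succ_dvd_prod_one_add_single [CommRing k] [AddCommGroup G] {ι κ : Type*} [Fintype ι]
    {p : ℕ} (hp : p.Prime) {E : ι → G} {e : ι → ℕ} {f : ℕ} (hE : ∀ j, p ^ e j • E j = 0)
    (hef : ∀ j, e j ≤ f) (hgen : ∀ g, ∃ n : ι → ℕ, g = ∑ j, n j • E j) {s : Finset κ}
    (g : κ → G) {m : ℕ} (hm : m * ((p - 1) * p ^ (f - 1)) + (1 + ∑ j, (p ^ e j - 1)) ≤ #s) :
    (p : k[G]) ^ (m + 1) ∣ ∏ i ∈ s, (1 + single (g i) ((p : k) - 1)) := by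
  have hx : ∀ j, single (E j) (1 : k) ^ p ^ e j = 1 := fun j => by simp [single_pow, hE, one_def]
  have hfactor : ∀ i, 1 + single (g i) ((p : k) - 1) =
      (p : k[G]) + -((p : k[G]) - 1) * (1 - single (g i) 1) := fun i => by
    rw [← natCast_sub_one_mul_single_one]; ring
  simp only [hfactor]
  refine pow_succ_dvd_prod_add_mul _ (Nat.one_le_iff_ne_zero.2 ?_)
    (fun _ _ => Ideal.span_range_pow_le_span_singleton_pow
      (fun j => hp.exists_one_sub_pow_pow_eq_of_pow_pow_eq_one (hx j))
      (fun j => Nat.pow_le_sub_one_mul_pow_pred_add_pow_pred hp.one_le (hef j))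
      (fun j => Nat.pow_le_two_mul_sub_one_mul_pow_pred_add_one hp.two_le (hef j)))
    (fun i _ => ?_) hm
  · exact mul_ne_zero (by have := hp.two_le; omega) (pow_ne_zero _ hp.ne_zero)
  · obtain ⟨n, hn⟩ := hgen (g i)
    exact hn ▸ one_sub_mem_span_range_one_sub (single_sum_nsmul_mem_closure E n)

theorem coeff_prod_one_add_single_zero [CommSemiring k] [AddCommMonoid G] [DecidableEq G]
    {κ : Type*} (s : Finset κ) (g : κ → G) (c : k) :
    (∏ i ∈ s, (1 + single (g i) c)).coeff 0 =
      ∑ j ∈ range (#s + 1), c ^ j * #{T ∈ s.powersetCard j | ∑ i ∈ T, g i = 0} := by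
  simp only [prod_one_add, prod_single, prod_const, coeff_sum, Finsupp.finsetSum_apply,
    coeff_single, Finsupp.single_apply, sum_powerset]
  refine sum_congr rfl fun j _ => ?_
  rw [← sum_filter, sum_congr rfl fun T hT => by rw [(mem_powersetCard.1 (mem_filter.1 hT).1).2],
    sum_const, nsmul_eq_mul, mul_comm]

theorem natCast_dvd_coeff_of_dvd [Semiring k] [AddMonoid G] {n : ℕ} {x : k[G]}
    (h : (n : k[G]) ∣ x) (g : G) : (n : k) ∣ x.coeff g := by
  obtain ⟨y, rfl⟩ := h
  rw [natCast_def, coeff_single_zero_mul]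
  exact dvd_mul_right _ _

end AddMonoidAlgebra

theorem AddMonoid.exists_exponent_eq_pow_of_forall_eq_sum_nsmul {G ι : Type*} [AddCommMonoid G]
    [Fintype ι] {p : ℕ} (hp : p.Prime) {E : ι → G} {e : ι → ℕ}
    (hE : ∀ j, addOrderOf (E j) = p ^ e j) (hgen : ∀ g, ∃ n : ι → ℕ, g = ∑ j, n j • E j) :
    ∃ f, AddMonoid.exponent G = p ^ f ∧ ∀ j, e j ≤ f := by
  have hkill : ∀ g : G, p ^ (∑ j, e j) • g = 0 := fun g => by
    obtain ⟨n, rfl⟩ := hgen g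
    rw [smul_sum]
    refine sum_eq_zero fun j _ => ?_
    rw [smul_comm, (addOrderOf_dvd_iff_nsmul_eq_zero (x := E j)).1 ?_, smul_zero]
    exact hE j ▸ pow_dvd_pow p (single_le_sum (fun _ _ => Nat.zero_le _) (mem_univ j))
  obtain ⟨f, -, hf⟩ :=
    (Nat.dvd_prime_pow hp).1 (AddMonoid.exponent_dvd_of_forall_nsmul_eq_zero hkill)
  refine ⟨f, hf, fun j => (Nat.pow_dvd_pow_iff_le_right hp.one_lt).1 ?_⟩
  rw [← hE j, ← hf]
  exact AddMonoid.addOrder_dvd_exponent (E j)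

namespace AddEquiv

variable {G ι : Type*} [AddCommGroup G] [DecidableEq ι] {n : ι → ℕ}
  (iso : G ≃+ ∀ i, ZMod (n i))

theorem addOrderOf_symm_single_one (j : ι) : addOrderOf (iso.symm (Pi.single j 1)) = n j := by
  rw [AddEquiv.addOrderOf_eq]
  exact (addOrderOf_injective (AddMonoidHom.single (fun i => ZMod (n i)) j)
    (Pi.single_injective (M := fun i => ZMod (n i)) j) 1).trans
    (ZMod.addOrderOf_one (n j))

theorem exists_eq_sum_nsmul_symm_single [Fintype ι] [∀ i, NeZero (n i)] (g : G) :
    ∃ c : ι → ℕ, g = ∑ j, c j • iso.symm (Pi.single j 1) := by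
  refine ⟨fun j => (iso g j).val, iso.injective ?_⟩
  conv_lhs => rw [← Finset.univ_sum_single (iso g)]
  simp only [map_sum, map_nsmul, apply_symm_apply, ← Pi.single_smul, nsmul_eq_mul, mul_one,
    ZMod.natCast_zmod_val]

end AddEquiv

theorem stmt12_general (p : ℕ) (hp : p.Prime) (G : Type*) [AddCommGroup G] [DecidableEq G]
    (r : ℕ) (qs e : Fin r → ℕ) (hqs : ∀ i, qs i = p ^ e i)
    (iso : G ≃+ ∀ i, ZMod (qs i))
    (q : ℕ) (hq : AddMonoid.exponent G = q) (hq1 : 1 < q)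
    (m ℓ : ℕ) (g : Fin ℓ → G)
    (hl : (ℓ : ℚ) ≥ (m : ℚ) * ((p : ℚ) - 1) * q / p + (1 + ∑ i, ((qs i : ℚ) - 1))) :
    (p : ℤ) ^ (m + 1) ∣
      ∑ j ∈ Finset.range (ℓ + 1),
        ((p : ℤ) - 1) ^ j *
          (((Finset.univ : Finset (Fin ℓ)).powersetCard j).filter
            (fun I => ∑ i ∈ I, g i = 0)).card := by
  have : ∀ i, NeZero (qs i) := fun i => ⟨hqs i ▸ pow_ne_zero _ hp.ne_zero⟩
  have hord : ∀ j, addOrderOf (iso.symm (Pi.single j 1)) = p ^ e j := fun j =>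
    (iso.addOrderOf_symm_single_one j).trans (hqs j)
  have hgen := iso.exists_eq_sum_nsmul_symm_single
  obtain ⟨f, hf, hef⟩ := AddMonoid.exists_exponent_eq_pow_of_forall_eq_sum_nsmul hp hord hgen
  obtain ⟨f, rfl⟩ : ∃ f', f = f' + 1 :=
    Nat.exists_eq_succ_of_ne_zero (by rintro rfl; simp [← hq, hf] at hq1)
  have hm : m * ((p - 1) * p ^ f) + (1 + ∑ j, (p ^ e j - 1)) ≤ ℓ := by
    have hcast : ((m * ((p - 1) * p ^ f) + (1 + ∑ j, (p ^ e j - 1)) : ℕ) : ℚ) =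
        m * ((p : ℚ) - 1) * q / p + (1 + ∑ i, ((qs i : ℚ) - 1)) := by
      have hp0 : (p : ℚ) ≠ 0 := by exact_mod_cast hp.ne_zero
      push_cast [← hq, hf, Nat.cast_sub hp.one_le, Nat.cast_sub (Nat.one_le_pow _ p hp.pos), hqs]
      field_simp
      ring
    exact_mod_cast hcast ▸ hl
  have hdvd := AddMonoidAlgebra.pow_succ_dvd_prod_one_add_single (k := ℤ) hp
    (fun j => hord j ▸ addOrderOf_nsmul_eq_zero _) hef hgen (s := univ) g
    (by rwa [card_fin, Nat.add_sub_cancel])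
  rw [← Nat.cast_pow] at hdvd
  have hcoeff := AddMonoidAlgebra.natCast_dvd_coeff_of_dvd hdvd 0
  rw [AddMonoidAlgebra.coeff_prod_one_add_single_zero, card_fin] at hcoeff
  exact_mod_cast hcoeff

theorem stmt12 (p : ℕ) (hp : p.Prime) (G : Type*) [AddCommGroup G] [Fintype G] [DecidableEq G]
    (r : ℕ) (qs e : Fin r → ℕ) (hqs : ∀ i, qs i = p ^ e i)
    (iso : G ≃+ ∀ i, ZMod (qs i))
    (q : ℕ) (hq : AddMonoid.exponent G = q) (hq1 : 1 < q)
    (m ℓ : ℕ) (g : Fin ℓ → G)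
    (hl : (ℓ : ℚ) ≥ (m : ℚ) * ((p : ℚ) - 1) * q / p + (1 + ∑ i, ((qs i : ℚ) - 1))) :
    (p : ℤ) ^ (m + 1) ∣
      ∑ j ∈ Finset.range (ℓ + 1),
        ((p : ℤ) - 1) ^ j *
          (((Finset.univ : Finset (Fin ℓ)).powersetCard j).filter
            (fun I => ∑ i ∈ I, g i = 0)).card :=
  stmt12_general p hp G r qs e hqs iso q hq hq1 m ℓ g hl
end

section
/- Let G be a finite abelian group with exponent q, let D*(G) be as usual, and let k_0 ≥ 1. Suppose s_{kq}(G) ≤ kq + D*(G) − 1 for all integers k with k_0 ≤ k ≤ 2k_0 − 1. Then s_{kq}(G) ≤ kq + D*(G) − 1 for all k ≥ k_0. (Transfer lemma.) -/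
lemma exists_le_card_eq {α : Type*} {S : Multiset α} {n : ℕ} (h : n ≤ S.card) :
    ∃ T : Multiset α, T ≤ S ∧ T.card = n := by
  refine ⟨(S.toList.take n : List α), ?_, ?_⟩
  · have : ((S.toList.take n : List α) : Multiset α) ≤ (S.toList : Multiset α) :=
      Multiset.coe_le.mpr (List.take_sublist n S.toList).subperm
    simpa using this
  · simp [List.length_take]
    omega

theorem stmt18 (G : Type*) [AddCommGroup G] [Fintype G]
    (r : ℕ) (ns : Fin r → ℕ)
    (hchain : ∀ i j : Fin r, i ≤ j → ns i ∣ ns j)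
    (iso : G ≃+ ∀ i, ZMod (ns i))
    (q : ℕ) (hq : AddMonoid.exponent G = q)
    (k₀ : ℕ) (hk₀ : 1 ≤ k₀)
    (hyp : ∀ k : ℕ, k₀ ≤ k → k ≤ 2 * k₀ - 1 →
      ∀ S : Multiset G, S.card = k * q + (1 + ∑ i, (ns i - 1)) - 1 →
        ∃ T, T ≤ S ∧ T.card = k * q ∧ T.sum = 0) :
    ∀ k : ℕ, k₀ ≤ k →
      ∀ S : Multiset G, S.card = k * q + (1 + ∑ i, (ns i - 1)) - 1 →
        ∃ T, T ≤ S ∧ T.card = k * q ∧ T.sum = 0 := by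
  intro k
  induction k using Nat.strong_induction_on with
  | _ k ih =>
    intro hk S hS
    by_cases hk2 : k ≤ 2 * k₀ - 1
    · exact hyp k hk hk2 S hS
    · have := Classical.decEq G
      push_neg at hk2
      set D := 1 + ∑ i, (ns i - 1) with hD
      have hDpos : 1 ≤ D := Nat.le_add_right 1 _
      have hmul : k₀ * q ≤ k * q := Nat.mul_le_mul_right q hk
      have hle : k₀ * q + D - 1 ≤ S.card := by omega
      obtain ⟨S₁, hS₁le, hS₁card⟩ := exists_le_card_eq hle
      obtain ⟨T₁, hT₁le, hT₁card, hT₁sum⟩ :=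
        hyp k₀ le_rfl (by omega) S₁ hS₁card
      have hT₁S : T₁ ≤ S := hT₁le.trans hS₁le
      have hcard₂ : (S - T₁).card = (k - k₀) * q + D - 1 := by
        rw [Multiset.card_sub hT₁S, hS, hT₁card, Nat.sub_mul]
        omega
      obtain ⟨T₂, hT₂le, hT₂card, hT₂sum⟩ :=
        ih (k - k₀) (by omega) (by omega) (S - T₁) hcard₂
      refine ⟨T₁ + T₂, ?_, ?_, ?_⟩
      · rw [add_comm]
        exact (le_tsub_iff_right hT₁S).mp hT₂le
      · rw [Multiset.card_add, hT₁card, hT₂card, ← Nat.add_mul]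
        congr 1
        omega
      · rw [Multiset.sum_add, hT₁sum, hT₂sum, add_zero]
end
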